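/- arXiv:2403.08129 — 8 statements merged into one kernel-verified Lean document; each statement's English description precedes it below -/
import Mathlib

section
/- Let G be a finite nonsolvable group whose solvable radical R(G) is nontrivial, and let X ⊆ G be a set of elements disjoint from R(G). Then X is a solvabilizer covering of G (i.e., G = ∪_{x∈X} Sol_G(x)) if and only if the set of cosets {xR(G) : x ∈ X} is a solvabilizer covering of the quotient group G/R(G) (i.e., G/R(G) = ∪_{x∈X} Sol_{G/R(G)}(xR(G))). -/
open scoped MatrixGroups

/-- The solvabilizer of `x` in `G`:
`Sol_G(x) = {y : the subgroup generated by x and y is solvable}`. -/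
def Sol {G : Type*} [Group G] (x : G) : Set G :=
  {y | IsSolvable ↥(Subgroup.closure ({x, y} : Set G))}

/-- The solvabilizer number `α(G)`: the minimum cardinality of a set `X` of elements lying
outside the solvable radical (equivalently, outside every solvable normal subgroup)
whose solvabilizers cover `G`. -/
noncomputable def solvNumber (G : Type*) [Group G] : ℕ :=
  sInf {n : ℕ | ∃ X : Finset G,
    (∀ x ∈ X, ¬∃ N : Subgroup G, N.Normal ∧ IsSolvable ↥N ∧ x ∈ N) ∧
    X.card = n ∧ ∀ g : G, ∃ x ∈ X, g ∈ Sol x}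

/-! Solvability of a subgroup `H` is detected modulo a solvable normal subgroup `N`, since `H`
is an extension of its image by `H ⊓ N`. Applied to `H = ⟨x, y⟩`, this says that solvabilizers
are unions of cosets of the solvable radical and are computed in `G ⧸ R(G)`. -/

namespace Group

variable {G G' : Type*} [Group G] [Group G'] (f : G →* G') [IsSolvable f.ker]

theorem isSolvable_map_iff (H : Subgroup G) : IsSolvable (H.map f) ↔ IsSolvable H := by
  refine ⟨fun _ ↦ ?_, fun _ ↦ isSolvable_of_surjective (f.subgroupMap_surjective H)⟩
  have : IsSolvable ↥(H ⊓ f.ker) :=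
    isSolvable_of_isSolvable_injective (Subgroup.inclusion_injective inf_le_right)
  refine isSolvable_of_ker_le_range (Subgroup.inclusion (inf_le_left : H ⊓ f.ker ≤ H))
    (f.subgroupMap H) ?_
  intro h hh
  exact ⟨⟨h, h.2, congrArg Subtype.val hh⟩, rfl⟩

theorem map_mem_sol_iff (x y : G) : f y ∈ Sol (f x) ↔ y ∈ Sol x := by
  have hmap : (Subgroup.closure {x, y}).map f = Subgroup.closure {f x, f y} := by
    rw [MonoidHom.map_closure, Set.image_pair]
  change IsSolvable _ ↔ IsSolvable _
  rw [← hmap, isSolvable_map_iff]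

theorem forall_exists_mem_sol_iff_of_surjective (hf : Function.Surjective f) (X : Set G) :
    (∀ g : G, ∃ x ∈ X, g ∈ Sol x) ↔ ∀ g' : G', ∃ x ∈ X, g' ∈ Sol (f x) := by
  simp only [hf.forall, map_mem_sol_iff]

end Group

theorem stmt0_general {G : Type*} [Group G]
    (R : Subgroup G) [R.Normal] (hRsolv : IsSolvable ↥R)
    (X : Set G) :
    (∀ g : G, ∃ x ∈ X, g ∈ Sol x) ↔
      (∀ g : G ⧸ R, ∃ x ∈ X, g ∈ Sol ((x : G) : G ⧸ R)) := by
  have : Group.IsSolvable (QuotientGroup.mk' R).ker := by rwa [QuotientGroup.ker_mk']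
  exact Group.forall_exists_mem_sol_iff_of_surjective _ (QuotientGroup.mk'_surjective R) X

/-- Theorem (quotient): for a finite nonsolvable group `G` with nontrivial solvable
radical `R`, a set `X ⊆ G \ R` is a solvabilizer covering of `G` iff the corresponding
set of cosets is a solvabilizer covering of `G ⧸ R`. -/
theorem stmt0 {G : Type*} [Group G] [Finite G] (hG : ¬IsSolvable G)
    (R : Subgroup G) [R.Normal] (hRsolv : IsSolvable ↥R)
    (hRmax : ∀ N : Subgroup G, N.Normal → IsSolvable ↥N → N ≤ R)
    (hRne : R ≠ ⊥)
    (X : Set G) (hX : ∀ x ∈ X, x ∉ R) :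
    (∀ g : G, ∃ x ∈ X, g ∈ Sol x) ↔
      (∀ g : G ⧸ R, ∃ x ∈ X, g ∈ Sol ((x : G) : G ⧸ R)) :=
  stmt0_general R hRsolv X
end

section
/- Let G be a finite nonabelian simple group. Then G has a minimal solvabilizer covering consisting of elements of prime order; that is, there exists a set X ⊆ G \ {1} with G = ∪_{x∈X} Sol_G(x), with |X| equal to the solvabilizer number α(G), and such that every element of X has prime order. -/
open scoped MatrixGroups

/-!
Replacing an element `x` of a solvabilizer covering by a power `x ^ n` of prime order only
enlarges its solvabilizer, because `⟨x ^ n, y⟩ ≤ ⟨x, y⟩`; the replaced set is again a covering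
and has at most as many elements, so a minimal covering stays minimal. In a nonabelian simple
group the only solvable normal subgroup is trivial, so the side condition in `solvNumber` just
says `x ≠ 1`.
-/

section

variable {G : Type*} [Group G]

theorem mem_Sol_of_commute {x y : G} (h : Commute x y) : y ∈ Sol x := by
  have := Subgroup.isMulCommutative_closure (k := {x, y}) <| by
    simp only [Set.mem_insert_iff, Set.mem_singleton_iff]
    rintro a (rfl | rfl) b (rfl | rfl)
    exacts [rfl, h, h.symm, rfl]
  exact Group.isSolvable_of_comm fun a b => Std.Commutative.comm a b

theorem Sol_subset_Sol_pow (x : G) (n : ℕ) : Sol x ⊆ Sol (x ^ n) := by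
  intro y (hy : Group.IsSolvable _)
  have hle : Subgroup.closure {x ^ n, y} ≤ Subgroup.closure {x, y} :=
    Subgroup.closure_le _ |>.mpr <| Set.insert_subset
      (pow_mem (Subgroup.subset_closure (by simp)) n)
      (by simpa using Subgroup.subset_closure (by simp))
  exact Group.isSolvable_of_isSolvable_injective (Subgroup.inclusion_injective hle)

theorem exists_orderOf_pow_prime {x : G} (hx : IsOfFinOrder x) (h1 : x ≠ 1) :
    ∃ n : ℕ, (orderOf (x ^ n)).Prime := by
  obtain ⟨p, hp, hdvd⟩ := Nat.exists_prime_and_dvd (orderOf_eq_one_iff.not.mpr h1)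
  exact ⟨orderOf x / p, (orderOf_pow_orderOf_div hx.orderOf_pos.ne' hdvd).symm ▸ hp⟩

theorem notMem_solvable_normal_of_ne_one [IsSimpleGroup G] (hnab : ∃ a b : G, a * b ≠ b * a)
    {x : G} (hx : x ≠ 1) : ¬∃ N : Subgroup G, N.Normal ∧ Group.IsSolvable N ∧ x ∈ N := by
  rintro ⟨N, hN, hsolv, hxN⟩
  obtain rfl | rfl := hN.eq_bot_or_eq_top
  · exact hx hxN
  · have : Group.IsSolvable G :=
      Group.isSolvable_of_surjective (f := (Subgroup.topEquiv (G := G)).toMonoidHom)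
        Subgroup.topEquiv.surjective
    obtain ⟨a, b, hab⟩ := hnab
    exact hab (IsSimpleGroup.comm_iff_isSolvable.mpr this a b)

theorem exists_covering_orderOf_prime [Finite G] {X : Finset G} (hX : ∀ x ∈ X, x ≠ 1)
    (hcov : ∀ g : G, ∃ x ∈ X, g ∈ Sol x) :
    ∃ Y : Finset G, Y.card ≤ X.card ∧ (∀ y ∈ Y, (orderOf y).Prime) ∧
      ∀ g : G, ∃ y ∈ Y, g ∈ Sol y := by
  classical
  choose! n hn using fun x hx =>
    exists_orderOf_pow_prime (isOfFinOrder_of_finite x) (hX x hx)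
  refine ⟨X.image fun x => x ^ n x, Finset.card_image_le, ?_, fun g => ?_⟩
  · simpa using hn
  · obtain ⟨x, hx, hg⟩ := hcov g
    exact ⟨x ^ n x, Finset.mem_image_of_mem _ hx, Sol_subset_Sol_pow x (n x) hg⟩

theorem exists_ne_one_mem_Sol [Nontrivial G] (g : G) : ∃ x ≠ 1, g ∈ Sol x := by
  by_cases hg : g = 1
  · obtain ⟨a, ha⟩ := exists_ne (1 : G)
    exact ⟨a, ha, hg ▸ mem_Sol_of_commute (Commute.one_right a)⟩
  · exact ⟨g, hg, mem_Sol_of_commute (Commute.refl g)⟩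

theorem solvNumber_le {X : Finset G}
    (hX : ∀ x ∈ X, ¬∃ N : Subgroup G, N.Normal ∧ Group.IsSolvable N ∧ x ∈ N)
    (hcov : ∀ g : G, ∃ x ∈ X, g ∈ Sol x) : solvNumber G ≤ X.card :=
  Nat.sInf_le ⟨X, hX, rfl, hcov⟩

theorem exists_card_eq_solvNumber {X : Finset G}
    (hX : ∀ x ∈ X, ¬∃ N : Subgroup G, N.Normal ∧ Group.IsSolvable N ∧ x ∈ N)
    (hcov : ∀ g : G, ∃ x ∈ X, g ∈ Sol x) :
    ∃ Y : Finset G,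
      (∀ y ∈ Y, ¬∃ N : Subgroup G, N.Normal ∧ Group.IsSolvable N ∧ y ∈ N) ∧
      Y.card = solvNumber G ∧ ∀ g : G, ∃ y ∈ Y, g ∈ Sol y :=
  (Nat.sInf_mem ⟨X.card, X, hX, rfl, hcov⟩ : solvNumber G ∈ _)

end

/-- A finite nonabelian simple group has a minimal solvabilizer covering consisting of
elements of prime order. -/
theorem stmt4 {G : Type*} [Group G] [Finite G] [IsSimpleGroup G]
    (hnab : ∃ a b : G, a * b ≠ b * a) :
    ∃ X : Finset G, (∀ x ∈ X, x ≠ 1) ∧ (∀ g : G, ∃ x ∈ X, g ∈ Sol x) ∧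
      X.card = solvNumber G ∧ ∀ x ∈ X, (orderOf x).Prime := by
  classical
  have := Fintype.ofFinite G
  obtain ⟨X, hXsolv, hXcard, hXcov⟩ := exists_card_eq_solvNumber (X := Finset.univ.erase 1)
    (fun x hx => notMem_solvable_normal_of_ne_one hnab (Finset.ne_of_mem_erase hx))
    (fun g => by simpa using exists_ne_one_mem_Sol g)
  have hX1 : ∀ x ∈ X, x ≠ 1 := fun x hx h1 =>
    hXsolv x hx ⟨⊥, inferInstance, inferInstance, h1 ▸ one_mem _⟩
  obtain ⟨Y, hYcard, hYprime, hYcov⟩ := exists_covering_orderOf_prime hX1 hXcov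
  have hY1 : ∀ y ∈ Y, y ≠ 1 := fun y hy => orderOf_eq_one_iff.not.mp (hYprime y hy).ne_one
  have := solvNumber_le (fun y hy => notMem_solvable_normal_of_ne_one hnab (hY1 y hy)) hYcov
  exact ⟨Y, hY1, hYcov, by omega, hYprime⟩
end

section
/- Let H and K be finite groups and let G = H × K be their direct product. Then for every (x, y) ∈ G, Sol_G((x, y)) = Sol_H(x) × Sol_K(y) (the Cartesian product of the two solvabilizer sets). -/
open scoped MatrixGroups

open Subgroup

section

variable {G N : Type*} [Group G] [Group N]

theorem Subgroup.isSolvable_of_le {A B : Subgroup G} (hAB : A ≤ B) [Group.IsSolvable B] :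
    Group.IsSolvable A :=
  Group.isSolvable_of_isSolvable_injective (inclusion_injective hAB)

theorem Subgroup.isSolvable_map (f : G →* N) (A : Subgroup G) [Group.IsSolvable A] :
    Group.IsSolvable (A.map f) :=
  Group.isSolvable_of_surjective (f.subgroupMap_surjective A)

theorem Subgroup.isSolvable_prod (A : Subgroup G) (B : Subgroup N) [Group.IsSolvable A]
    [Group.IsSolvable B] : Group.IsSolvable (A.prod B) :=
  Group.isSolvable_of_isSolvable_injective (f := (A.prodEquiv B).toMonoidHom)
    (A.prodEquiv B).injective

theorem Subgroup.map_closure_pair (f : G →* N) (a b : G) :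
    (closure {a, b}).map f = closure {f a, f b} := by
  rw [MonoidHom.map_closure, Set.image_pair]

theorem Subgroup.closure_pair_le_prod (x a : G) (y b : N) :
    closure {((x, y) : G × N), (a, b)} ≤ (closure {x, a}).prod (closure {y, b}) := by
  rw [closure_le, Set.pair_subset_iff]
  exact ⟨⟨subset_closure (by simp), subset_closure (by simp)⟩,
    ⟨subset_closure (by simp), subset_closure (by simp)⟩⟩

-- `Sol` is phrased with the deprecated alias `IsSolvable`, which instance search does not see
-- through, so membership is restated with `Group.IsSolvable` before the instances are used.
theorem apply_mem_Sol (f : G →* N) {x y : G} (hy : y ∈ Sol x) : f y ∈ Sol (f x) := by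
  have : Group.IsSolvable (closure {x, y}) := hy
  change Group.IsSolvable (closure {f x, f y})
  rw [← map_closure_pair]
  exact isSolvable_map f _

theorem prodMk_mem_Sol {x a : G} {y b : N} (ha : a ∈ Sol x) (hb : b ∈ Sol y) :
    ((a, b) : G × N) ∈ Sol (x, y) := by
  have : Group.IsSolvable (closure {x, a}) := ha
  have : Group.IsSolvable (closure {y, b}) := hb
  have := isSolvable_prod (closure {x, a}) (closure {y, b})
  exact isSolvable_of_le (closure_pair_le_prod x a y b)

end

theorem stmt8_general {H K : Type*} [Group H] [Group K] (x : H) (y : K) :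
    Sol ((x, y) : H × K) = Sol x ×ˢ Sol y := by
  ext ⟨a, b⟩
  refine ⟨fun h => ⟨?_, ?_⟩, fun h => prodMk_mem_Sol h.1 h.2⟩
  · simpa using apply_mem_Sol (MonoidHom.fst H K) h
  · simpa using apply_mem_Sol (MonoidHom.snd H K) h

/-- In a direct product of finite groups, the solvabilizer of a pair is the Cartesian
product of the solvabilizers of the components. -/
theorem stmt8 {H K : Type*} [Group H] [Group K] [Finite H] [Finite K] (x : H) (y : K) :
    Sol ((x, y) : H × K) = Sol x ×ˢ Sol y :=
  stmt8_general x y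
end

section
/- Let G = H × K be a finite group where H is nonsolvable and K is solvable. Then the solvabilizer number of G equals the solvabilizer number of H: α(H × K) = α(H). -/
open scoped MatrixGroups

lemma solv_of_le {G : Type*} [Group G] {A B : Subgroup G} (h : A ≤ B)
    (hB : IsSolvable ↥B) : IsSolvable ↥A := by
  haveI : Group.IsSolvable ↥B := hB
  exact solvable_of_solvable_injective (Subgroup.inclusion_injective h)

lemma solv_map {G G' : Type*} [Group G] [Group G'] (f : G →* G') (A : Subgroup G)
    (hA : IsSolvable ↥A) : IsSolvable ↥(A.map f) := by
  haveI : Group.IsSolvable ↥A := hA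
  exact solvable_of_surjective (f.subgroupMap_surjective A)

lemma solv_prod_top {H K : Type*} [Group H] [Group K] (hK : IsSolvable K)
    (N : Subgroup H) (hN : IsSolvable ↥N) : IsSolvable ↥(N.prod (⊤ : Subgroup K)) := by
  haveI : Group.IsSolvable (↥N × ↥(⊤ : Subgroup K)) := by
    haveI : Group.IsSolvable ↥N := hN
    haveI : Group.IsSolvable K := hK
    infer_instance
  exact solvable_of_solvable_injective
    (f := ((Subgroup.prodEquiv N (⊤ : Subgroup K)) : ↥(N.prod ⊤) →* ↥N × ↥(⊤ : Subgroup K)))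
    (Subgroup.prodEquiv _ _).injective

lemma sol_pair_proj {H K : Type*} [Group H] [Group K] {x y : H} {k l : K}
    (h : IsSolvable ↥(Subgroup.closure ({(x,k),(y,l)} : Set (H × K)))) :
    IsSolvable ↥(Subgroup.closure ({x, y} : Set H)) := by
  have := solv_map (MonoidHom.fst H K) _ h
  rwa [MonoidHom.map_closure, Set.image_pair] at this

lemma sol_pair_prod {H K : Type*} [Group H] [Group K] (hK : IsSolvable K) {x y : H} (k l : K)
    (h : IsSolvable ↥(Subgroup.closure ({x, y} : Set H))) :
    IsSolvable ↥(Subgroup.closure ({(x,k),(y,l)} : Set (H × K))) := by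
  have hle : Subgroup.closure ({(x,k),(y,l)} : Set (H × K)) ≤
      (Subgroup.closure ({x, y} : Set H)).prod ⊤ := by
    rw [Subgroup.closure_le]
    rintro p (rfl | rfl) <;>
      exact ⟨Subgroup.subset_closure (by simp), trivial⟩
  exact solv_of_le hle (solv_prod_top hK _ h)

/-- If `H` is nonsolvable and `K` is solvable (both finite), then
`α(H × K) = α(H)`. -/
theorem stmt9 {H K : Type*} [Group H] [Group K] [Finite H] [Finite K]
    (hH : ¬IsSolvable H) (hK : IsSolvable K) :
    solvNumber (H × K) = solvNumber H := by
  classical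
  set S₁ : Set ℕ := {n : ℕ | ∃ X : Finset (H × K),
    (∀ x ∈ X, ¬∃ N : Subgroup (H × K), N.Normal ∧ IsSolvable ↥N ∧ x ∈ N) ∧
    X.card = n ∧ ∀ g : H × K, ∃ x ∈ X, g ∈ Sol x} with hS₁
  set S₂ : Set ℕ := {n : ℕ | ∃ X : Finset H,
    (∀ x ∈ X, ¬∃ N : Subgroup H, N.Normal ∧ IsSolvable ↥N ∧ x ∈ N) ∧
    X.card = n ∧ ∀ g : H, ∃ x ∈ X, g ∈ Sol x} with hS₂
  have hA : S₂ ⊆ S₁ := by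
    rintro n ⟨X, hrad, hcard, hcov⟩
    refine ⟨X.image (fun x => ((x, (1 : K)) : H × K)), ?_, ?_, ?_⟩
    · intro p hp
      simp only [Finset.mem_image] at hp
      obtain ⟨x, hx, rfl⟩ := hp
      rintro ⟨N, hNn, hNs, hmem⟩
      exact hrad x hx ⟨N.map (MonoidHom.fst H K),
        hNn.map _ Prod.fst_surjective, solv_map _ _ hNs,
        Subgroup.mem_map_of_mem _ hmem⟩
    · rw [Finset.card_image_of_injective _ (fun a b hab => (Prod.mk.injEq _ _ _ _ ▸ hab).1),
        hcard]
    · rintro ⟨a, b⟩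
      obtain ⟨x, hx, hsol⟩ := hcov a
      exact ⟨(x, 1), Finset.mem_image_of_mem _ hx, sol_pair_prod hK 1 b hsol⟩
  have hB : ∀ n ∈ S₁, ∃ m ∈ S₂, m ≤ n := by
    rintro n ⟨X, hrad, hcard, hcov⟩
    refine ⟨(X.image Prod.fst).card, ⟨X.image Prod.fst, ?_, rfl, ?_⟩, ?_⟩
    · intro x hx
      simp only [Finset.mem_image] at hx
      obtain ⟨p, hp, rfl⟩ := hx
      rintro ⟨N, hNn, hNs, hmem⟩
      haveI := hNn
      exact hrad p hp ⟨N.prod ⊤, Subgroup.prod_normal _ _,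
        solv_prod_top hK _ hNs, Subgroup.mem_prod.mpr ⟨hmem, trivial⟩⟩
    · intro g
      obtain ⟨⟨x, k⟩, hx, hsol⟩ := hcov (g, 1)
      exact ⟨x, Finset.mem_image_of_mem _ hx, sol_pair_proj hsol⟩
    · rw [← hcard]; exact Finset.card_image_le
  unfold solvNumber
  rw [← hS₁, ← hS₂]
  rcases Set.eq_empty_or_nonempty S₁ with h1 | h1
  · have h2 : S₂ = ∅ := Set.eq_empty_of_subset_empty (h1 ▸ hA)
    rw [h1, h2]
  · obtain ⟨m, hm, hmle⟩ := hB _ (Nat.sInf_mem h1)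
    exact le_antisymm (Nat.sInf_le (hA (Nat.sInf_mem ⟨m, hm⟩)))
      (le_trans (Nat.sInf_le hm) hmle)
end

section
/- Let G = H × K be a finite group where both H and K are nonsolvable. Then the solvabilizer number of G equals the minimum of the solvabilizer numbers of the factors: α(H × K) = min{α(H), α(K)}. -/
open scoped MatrixGroups

section aux
open Subgroup
variable {G : Type*} [Group G]

lemma mySolvable_of_le {A B : Subgroup G} (h : A ≤ B) [Group.IsSolvable ↥B] : Group.IsSolvable ↥A :=
  solvable_of_solvable_injective (Subgroup.inclusion_injective h)

lemma mySolvable_map {G' : Type*} [Group G'] (f : G →* G') (A : Subgroup G) [Group.IsSolvable ↥A] :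
    Group.IsSolvable ↥(A.map f) :=
  solvable_of_surjective (f.subgroupMap_surjective A)

lemma mySup_solvable (N T : Subgroup G) [N.Normal] [hN : Group.IsSolvable ↥N] [Group.IsSolvable ↥T] :
    Group.IsSolvable ↥(N ⊔ T) := by
  rw [sup_comm]
  have e := QuotientGroup.quotientInfEquivProdNormalQuotient T N
  have h1 : Group.IsSolvable (↥(T ⊔ N) ⧸ N.subgroupOf (T ⊔ N)) :=
    solvable_of_surjective (f := e.toMonoidHom) e.surjective
  have e2 := Subgroup.subgroupOfEquivOfLe (le_sup_right : N ≤ T ⊔ N)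
  have h2 : Group.IsSolvable ↥(N.subgroupOf (T ⊔ N)) :=
    solvable_of_solvable_injective (f := e2.toMonoidHom) e2.injective
  haveI : (N.subgroupOf (T ⊔ N)).Normal := Subgroup.normal_subgroupOf
  exact solvable_of_ker_le_range (N.subgroupOf (T ⊔ N)).subtype
    (QuotientGroup.mk' (N.subgroupOf (T ⊔ N)))
    (by rw [QuotientGroup.ker_mk', Subgroup.range_subtype])

lemma sol_of_mem_normal {N : Subgroup G} [N.Normal] [Group.IsSolvable ↥N] {x : G} (hx : x ∈ N)
    (g : G) : g ∈ Sol x := by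
  show Group.IsSolvable _
  haveI : Group.IsSolvable ↥(zpowers g) :=
    Group.isSolvable_of_comm (fun a b => (zpowers_isMulCommutative g).is_comm.comm a b)
  haveI : Group.IsSolvable ↥(N ⊔ zpowers g) := mySup_solvable N (zpowers g)
  refine mySolvable_of_le (B := N ⊔ zpowers g) (closure_le _ |>.mpr ?_)
  rintro z hz
  rcases hz with rfl | rfl
  · exact Subgroup.mem_sup_left hx
  · exact Subgroup.mem_sup_right (mem_zpowers _)

lemma sol_self (g : G) : g ∈ Sol g := by
  show Group.IsSolvable _
  rw [Set.pair_eq_singleton, ← zpowers_eq_closure]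
  exact Group.isSolvable_of_comm (fun a b => (zpowers_isMulCommutative g).is_comm.comm a b)

lemma sol_comm {x y : G} (h : y ∈ Sol x) : x ∈ Sol y := by
  show Group.IsSolvable _
  rw [Set.pair_comm]
  exact h

/-- The defining set of `solvNumber`. -/
def SolvSet (G : Type*) [Group G] : Set ℕ :=
  {n : ℕ | ∃ X : Finset G,
    (∀ x ∈ X, ¬∃ N : Subgroup G, N.Normal ∧ IsSolvable ↥N ∧ x ∈ N) ∧
    X.card = n ∧ ∀ g : G, ∃ x ∈ X, g ∈ Sol x}

lemma solvNumber_eq (G : Type*) [Group G] : solvNumber G = sInf (SolvSet G) := rfl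

lemma exists_stays [Finite G] (hG : ¬Group.IsSolvable G) :
    ∃ x : G, ¬∃ N : Subgroup G, N.Normal ∧ Group.IsSolvable ↥N ∧ x ∈ N := by
  by_contra hc
  push_neg at hc
  apply hG
  set S : Set (Subgroup G) := {N | N.Normal ∧ Group.IsSolvable ↥N} with hS
  have hfin : S.Finite := Set.toFinite S
  have hne : S.Nonempty := ⟨⊥, inferInstance, inferInstance⟩
  obtain ⟨M, hMS, hmax⟩ := Set.Finite.exists_maximalFor id S hfin hne
  haveI hMn : M.Normal := hMS.1
  haveI hMs : Group.IsSolvable ↥M := hMS.2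
  have hM : ∀ N ∈ S, N ≤ M := by
    intro N hN
    haveI : N.Normal := hN.1
    haveI : Group.IsSolvable ↥N := hN.2
    have hsup : M ⊔ N ∈ S := ⟨Subgroup.sup_normal M N, mySup_solvable M N⟩
    have := hmax hsup le_sup_left
    simp only [id] at this
    exact le_sup_right.trans this
  have hMtop : M = ⊤ := by
    rw [eq_top_iff']
    intro x
    obtain ⟨N, h1, h2, h3⟩ := hc x
    exact hM N ⟨h1, h2⟩ h3
  haveI : Group.IsSolvable ↥(⊤ : Subgroup G) := hMtop ▸ hMs
  exact solvable_of_surjective (f := (Subgroup.topEquiv (G := G)).toMonoidHom)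
    Subgroup.topEquiv.surjective

lemma solvSet_nonempty [Finite G] (hG : ¬Group.IsSolvable G) : (SolvSet G).Nonempty := by
  classical
  haveI := Fintype.ofFinite G
  set X : Finset G :=
    Finset.univ.filter (fun x => ¬∃ N : Subgroup G, N.Normal ∧ Group.IsSolvable ↥N ∧ x ∈ N) with hX
  refine ⟨X.card, X, ?_, rfl, ?_⟩
  · intro x hx
    exact (Finset.mem_filter.mp hx).2
  · intro g
    by_cases hg : ∃ N : Subgroup G, N.Normal ∧ Group.IsSolvable ↥N ∧ g ∈ N
    · obtain ⟨x, hx⟩ := exists_stays hG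
      refine ⟨x, Finset.mem_filter.mpr ⟨Finset.mem_univ x, hx⟩, ?_⟩
      obtain ⟨N, h1, h2, h3⟩ := hg
      haveI := h1; haveI := h2
      exact sol_comm (sol_of_mem_normal h3 x)
    · exact ⟨g, Finset.mem_filter.mpr ⟨Finset.mem_univ g, hg⟩, sol_self g⟩

end aux

section prod
open Subgroup
variable {H K : Type*} [Group H] [Group K]

lemma sol_prod {x y : H} {a b : K} :
    (y, b) ∈ Sol (x, a) ↔ y ∈ Sol x ∧ b ∈ Sol a := by
  constructor
  · intro h
    haveI : Group.IsSolvable ↥(closure ({(x, a), (y, b)} : Set (H × K))) := h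
    constructor
    · have h1 := mySolvable_map (MonoidHom.fst H K) (closure {(x, a), (y, b)})
      rw [MonoidHom.map_closure] at h1
      have him : ⇑(MonoidHom.fst H K) '' ({(x, a), (y, b)} : Set (H × K)) = {x, y} := by
        rw [Set.image_pair]
        rfl
      rw [him] at h1
      exact h1
    · have h1 := mySolvable_map (MonoidHom.snd H K) (closure {(x, a), (y, b)})
      rw [MonoidHom.map_closure] at h1
      have him : ⇑(MonoidHom.snd H K) '' ({(x, a), (y, b)} : Set (H × K)) = {a, b} := by
        rw [Set.image_pair]
        rfl
      rw [him] at h1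
      exact h1
  · rintro ⟨h1, h2⟩
    haveI : Group.IsSolvable ↥(closure ({x, y} : Set H)) := h1
    haveI : Group.IsSolvable ↥(closure ({a, b} : Set K)) := h2
    haveI : Group.IsSolvable ↥((closure ({x, y} : Set H)).prod (closure ({a, b} : Set K))) := by
      have e := Subgroup.prodEquiv (closure ({x, y} : Set H)) (closure ({a, b} : Set K))
      exact solvable_of_solvable_injective (f := e.toMonoidHom) e.injective
    show Group.IsSolvable _
    refine mySolvable_of_le
      (B := (closure ({x, y} : Set H)).prod (closure ({a, b} : Set K))) (closure_le _ |>.mpr ?_)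
    rintro z hz
    rcases hz with rfl | rfl
    · exact ⟨subset_closure (by simp), subset_closure (by simp)⟩
    · exact ⟨subset_closure (by simp), subset_closure (by simp)⟩

lemma lift_left : SolvSet H ⊆ SolvSet (H × K) := by
  classical
  rintro n ⟨X, hX1, hX2, hX3⟩
  refine ⟨X.image (fun x => (x, (1 : K))), ?_, ?_, ?_⟩
  · intro p hp
    obtain ⟨x, hx, rfl⟩ := Finset.mem_image.mp hp
    rintro ⟨N, hN1, hN2, hN3⟩
    haveI : Group.IsSolvable ↥N := hN2
    refine hX1 x hx ⟨N.map (MonoidHom.fst H K), hN1.map _ Prod.fst_surjective,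
      mySolvable_map _ N, ⟨(x, 1), hN3, rfl⟩⟩
  · rw [Finset.card_image_of_injective _ (fun p q h => (Prod.ext_iff.mp h).1)]
    exact hX2
  · rintro ⟨g, k⟩
    obtain ⟨x, hx, hgx⟩ := hX3 g
    refine ⟨(x, 1), Finset.mem_image_of_mem _ hx, sol_prod.mpr ⟨hgx, ?_⟩⟩
    exact sol_of_mem_normal (N := (⊥ : Subgroup K)) (Subgroup.mem_bot.mpr rfl) k

lemma lift_right : SolvSet K ⊆ SolvSet (H × K) := by
  classical
  rintro n ⟨X, hX1, hX2, hX3⟩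
  refine ⟨X.image (fun a => ((1 : H), a)), ?_, ?_, ?_⟩
  · intro p hp
    obtain ⟨a, ha, rfl⟩ := Finset.mem_image.mp hp
    rintro ⟨N, hN1, hN2, hN3⟩
    haveI : Group.IsSolvable ↥N := hN2
    refine hX1 a ha ⟨N.map (MonoidHom.snd H K), hN1.map _ Prod.snd_surjective,
      mySolvable_map _ N, ⟨(1, a), hN3, rfl⟩⟩
  · rw [Finset.card_image_of_injective _ (fun p q h => (Prod.ext_iff.mp h).2)]
    exact hX2
  · rintro ⟨g, k⟩
    obtain ⟨a, ha, hka⟩ := hX3 k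
    refine ⟨(1, a), Finset.mem_image_of_mem _ ha, sol_prod.mpr ⟨?_, hka⟩⟩
    exact sol_of_mem_normal (N := (⊥ : Subgroup H)) (Subgroup.mem_bot.mpr rfl) g

lemma lower {n : ℕ} (hn : n ∈ SolvSet (H × K)) :
    (∃ m ≤ n, m ∈ SolvSet H) ∨ (∃ m ≤ n, m ∈ SolvSet K) := by
  classical
  obtain ⟨X, h1, h2, h3⟩ := hn
  set X₁ : Finset H :=
    (X.filter (fun p => ¬∃ N : Subgroup H, N.Normal ∧ Group.IsSolvable ↥N ∧ p.1 ∈ N)).image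
      Prod.fst with hX₁
  by_cases hcov : ∀ g : H, ∃ x ∈ X₁, g ∈ Sol x
  · left
    refine ⟨X₁.card, h2 ▸ Finset.card_image_le.trans (Finset.card_filter_le _ _),
      X₁, ?_, rfl, hcov⟩
    intro x hx
    obtain ⟨p, hp, rfl⟩ := Finset.mem_image.mp hx
    exact (Finset.mem_filter.mp hp).2
  · right
    push_neg at hcov
    obtain ⟨h0, hh0⟩ := hcov
    set X₂ : Finset K :=
      (X.filter (fun p => ¬∃ N : Subgroup K, N.Normal ∧ Group.IsSolvable ↥N ∧ p.2 ∈ N)).image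
        Prod.snd with hX₂
    refine ⟨X₂.card, h2 ▸ Finset.card_image_le.trans (Finset.card_filter_le _ _),
      X₂, ?_, rfl, ?_⟩
    · intro a ha
      obtain ⟨p, hp, rfl⟩ := Finset.mem_image.mp ha
      exact (Finset.mem_filter.mp hp).2
    · intro k
      obtain ⟨⟨x, a⟩, hxa, hsol⟩ := h3 (h0, k)
      obtain ⟨hx, ha⟩ := sol_prod.mp hsol
      have hxrad : ∃ N : Subgroup H, N.Normal ∧ Group.IsSolvable ↥N ∧ x ∈ N := by
        by_contra hcx
        exact hh0 x (Finset.mem_image_of_mem _ (Finset.mem_filter.mpr ⟨hxa, hcx⟩)) hx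
      have harad : ¬∃ N : Subgroup K, N.Normal ∧ Group.IsSolvable ↥N ∧ a ∈ N := by
        rintro ⟨N₂, g1, g2, g3⟩
        obtain ⟨N₁, f1, f2, f3⟩ := hxrad
        haveI := f1; haveI := f2; haveI := g1; haveI := g2
        refine h1 (x, a) hxa ⟨N₁.prod N₂, Subgroup.prod_normal N₁ N₂, ?_,
          Subgroup.mem_prod.mpr ⟨f3, g3⟩⟩
        have e := Subgroup.prodEquiv N₁ N₂
        exact solvable_of_solvable_injective (f := e.toMonoidHom) e.injective
      exact ⟨a, Finset.mem_image_of_mem _ (Finset.mem_filter.mpr ⟨hxa, harad⟩), ha⟩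

end prod

/-- If `H` and `K` are both nonsolvable finite groups, then
`α(H × K) = min {α(H), α(K)}`. -/
theorem stmt10 {H K : Type*} [Group H] [Group K] [Finite H] [Finite K]
    (hH : ¬IsSolvable H) (hK : ¬IsSolvable K) :
    solvNumber (H × K) = min (solvNumber H) (solvNumber K) := by
  have hSH : (SolvSet H).Nonempty := solvSet_nonempty hH
  have hSK : (SolvSet K).Nonempty := solvSet_nonempty hK
  have hSHK : (SolvSet (H × K)).Nonempty := ⟨_, lift_left hSH.choose_spec⟩
  rw [solvNumber_eq, solvNumber_eq, solvNumber_eq]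
  apply le_antisymm
  · exact le_min (Nat.sInf_le (lift_left (Nat.sInf_mem hSH)))
      (Nat.sInf_le (lift_right (Nat.sInf_mem hSK)))
  · rcases lower (Nat.sInf_mem hSHK) with ⟨m, hm, hmS⟩ | ⟨m, hm, hmS⟩
    · exact le_trans (min_le_left _ _) ((Nat.sInf_le hmS).trans hm)
    · exact le_trans (min_le_right _ _) ((Nat.sInf_le hmS).trans hm)
end

section
/- Let G = H × K be a finite nonsolvable group where H is nonsolvable and admits an involutionary solvabilizer covering. (1) If K is solvable, then α_inv(H × K) = α_inv(H). (2) If K is nonsolvable, then α_inv(H × K) = min{α_inv(H), α_inv(K)}, where α_inv(K) is taken to be ∞ if K admits no involutionary solvabilizer covering. -/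
open scoped MatrixGroups

/-- The involutionary solvabilizer number `α_inv(G)` (valued in `ℕ∞`, equal to `∞` when no
involutionary solvabilizer covering exists): the minimum cardinality of a set `X` of
involutions outside the solvable radical whose solvabilizers cover `G`. -/
noncomputable def solvNumberInv (G : Type*) [Group G] : ℕ∞ :=
  sInf {n : ℕ∞ | ∃ X : Finset G,
    (∀ x ∈ X, orderOf x = 2) ∧
    (∀ x ∈ X, ¬∃ N : Subgroup G, N.Normal ∧ IsSolvable ↥N ∧ x ∈ N) ∧
    (X.card : ℕ∞) = n ∧ ∀ g : G, ∃ x ∈ X, g ∈ Sol x}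

/-
The lifts `x ↦ (x, 1)` and `y ↦ (1, y)` turn coverings of `H` and of `K` into coverings of
`H × K`, since `Sol (x, y) = Sol x ×ˢ Sol y` and `Sol 1` is everything. Conversely, let `X` cover
`H × K`. If the first coordinates of `X` outside the solvable radical of `H` already cover `H`,
they form a covering of `H`. Otherwise some `g₀ : H` is not covered by them; covering the points
`(g₀, k)` then forces first coordinates inside the radical, so the second coordinates must lie
outside the radical of `K`, and they cover `K`. When `K` is solvable the second case cannot occur.
-/

namespace Subgroup

variable {G G' : Type*} [Group G] [Group G']

theorem isSolvable_of_le_s11 {S T : Subgroup G} (h : S ≤ T) [Group.IsSolvable T] :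
    Group.IsSolvable S :=
  Group.isSolvable_of_isSolvable_injective (inclusion_injective h)

instance isSolvable_map_s11 (f : G →* G') (S : Subgroup G) [Group.IsSolvable S] :
    Group.IsSolvable (S.map f) :=
  Group.isSolvable_of_surjective (f.subgroupMap_surjective S)

instance isSolvable_prod_s11 (S : Subgroup G) (T : Subgroup G') [Group.IsSolvable S]
    [Group.IsSolvable T] : Group.IsSolvable (S.prod T) :=
  Group.isSolvable_of_isSolvable_injective (f := (prodEquiv S T).toMonoidHom)
    (prodEquiv S T).injective

end Subgroup

section Solvabilizer

variable {G G' : Type*} [Group G] [Group G']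

theorem mem_Sol_one (g : G) : g ∈ Sol (1 : G) := by
  change Group.IsSolvable (Subgroup.closure (insert 1 {g}))
  rw [Subgroup.closure_insert_one, ← Subgroup.zpowers_eq_closure]
  exact Group.isSolvable_of_comm fun a b => Subtype.ext (setLike_mul_comm a.2 b.2)

theorem map_mem_Sol (f : G →* G') {x y : G} (h : y ∈ Sol x) : f y ∈ Sol (f x) := by
  have : Group.IsSolvable (Subgroup.closure ({x, y} : Set G)) := h
  change Group.IsSolvable (Subgroup.closure ({f x, f y} : Set G'))
  rw [← Set.image_pair, ← MonoidHom.map_closure]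
  infer_instance

theorem Prod.mem_Sol_iff {p q : G × G'} : q ∈ Sol p ↔ q.1 ∈ Sol p.1 ∧ q.2 ∈ Sol p.2 := by
  refine ⟨fun h => ⟨map_mem_Sol (MonoidHom.fst G G') h, map_mem_Sol (MonoidHom.snd G G') h⟩,
    fun ⟨h₁, h₂⟩ => ?_⟩
  have : Group.IsSolvable (Subgroup.closure ({p.1, q.1} : Set G)) := h₁
  have : Group.IsSolvable (Subgroup.closure ({p.2, q.2} : Set G')) := h₂
  refine Subgroup.isSolvable_of_le_s11 (T := (Subgroup.closure {p.1, q.1}).prod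
    (Subgroup.closure {p.2, q.2})) ?_
  rw [Subgroup.closure_le, Set.pair_subset_iff]
  exact ⟨⟨Subgroup.subset_closure (.inl rfl), Subgroup.subset_closure (.inl rfl)⟩,
    ⟨Subgroup.subset_closure (.inr rfl), Subgroup.subset_closure (.inr rfl)⟩⟩

end Solvabilizer

section SolvableNormal

variable {G G' : Type*} [Group G] [Group G']

/-- `x` lies in a solvable normal subgroup, i.e. in the solvable radical `R(G)` when `G` is
finite. -/
def MemSolvableNormal (x : G) : Prop :=
  ∃ N : Subgroup G, N.Normal ∧ Group.IsSolvable N ∧ x ∈ N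

theorem memSolvableNormal_one : MemSolvableNormal (1 : G) :=
  ⟨⊥, inferInstance, inferInstance, Subgroup.one_mem _⟩

theorem memSolvableNormal_of_isSolvable [Group.IsSolvable G] (x : G) : MemSolvableNormal x :=
  ⟨⊤, inferInstance, inferInstance, Subgroup.mem_top x⟩

theorem MemSolvableNormal.map {f : G →* G'} (hf : Function.Surjective f) {x : G}
    (hx : MemSolvableNormal x) : MemSolvableNormal (f x) :=
  let ⟨N, hN, _, hxN⟩ := hx
  ⟨N.map f, hN.map f hf, inferInstance, Subgroup.mem_map_of_mem f hxN⟩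

theorem Prod.memSolvableNormal_iff {p : G × G'} :
    MemSolvableNormal p ↔ MemSolvableNormal p.1 ∧ MemSolvableNormal p.2 := by
  refine ⟨fun h => ⟨h.map (f := MonoidHom.fst G G') Prod.fst_surjective,
    h.map (f := MonoidHom.snd G G') Prod.snd_surjective⟩, ?_⟩
  rintro ⟨⟨N, hN, _, h₁⟩, ⟨M, hM, _, h₂⟩⟩
  exact ⟨N.prod M, Subgroup.prod_normal N M, inferInstance, Subgroup.mem_prod.2 ⟨h₁, h₂⟩⟩

end SolvableNormal

section Covering

variable {G G' : Type*} [Group G] [Group G']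

structure IsInvSolvCover (X : Finset G) : Prop where
  orderOf_eq_two : ∀ x ∈ X, orderOf x = 2
  not_memSolvableNormal : ∀ x ∈ X, ¬MemSolvableNormal x
  covers : ∀ g : G, ∃ x ∈ X, g ∈ Sol x

theorem IsInvSolvCover.sq_eq_one {X : Finset G} (hX : IsInvSolvCover X) : ∀ x ∈ X, x ^ 2 = 1 :=
  fun x hx => hX.orderOf_eq_two x hx ▸ pow_orderOf_eq_one x

theorem solvNumberInv_le_card {X : Finset G} (hX : IsInvSolvCover X) :
    solvNumberInv G ≤ X.card :=
  sInf_le ⟨X, hX.orderOf_eq_two, hX.not_memSolvableNormal, rfl, hX.covers⟩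

theorem le_solvNumberInv {n : ℕ∞} (h : ∀ X : Finset G, IsInvSolvCover X → n ≤ X.card) :
    n ≤ solvNumberInv G := by
  refine le_sInf ?_
  rintro _ ⟨X, hord, hrad, rfl, hcov⟩
  exact h X ⟨hord, hrad, hcov⟩

/-- The covering is `f '' X` with its points in the solvable radical discarded. -/
theorem solvNumberInv_le_card_of_map (f : G →* G') {X : Finset G} (hX : ∀ x ∈ X, x ^ 2 = 1)
    (hcov : ∀ g : G', ∃ x ∈ X, ¬MemSolvableNormal (f x) ∧ g ∈ Sol (f x)) :
    solvNumberInv G' ≤ X.card := by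
  classical
  set Y := (X.image f).filter fun y => ¬MemSolvableNormal y
  have hY : ∀ y ∈ Y, (∃ x ∈ X, f x = y) ∧ ¬MemSolvableNormal y := by
    simp [Y]
  refine (solvNumberInv_le_card (X := Y) ⟨fun y hy => ?_, fun y hy => (hY y hy).2,
    fun g => ?_⟩).trans (by exact_mod_cast (Finset.card_filter_le _ _).trans Finset.card_image_le)
  · obtain ⟨⟨x, hx, rfl⟩, hrad⟩ := hY _ hy
    exact orderOf_eq_prime (by rw [← map_pow, hX x hx, map_one])
      fun h => hrad (h ▸ memSolvableNormal_one)
  · obtain ⟨x, hx, hrad, hg⟩ := hcov g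
    exact ⟨f x, Finset.mem_filter.2 ⟨Finset.mem_image_of_mem f hx, hrad⟩, hg⟩

end Covering

section Product

variable {H K : Type*} [Group H] [Group K]

theorem solvNumberInv_prod_le_left : solvNumberInv (H × K) ≤ solvNumberInv H :=
  le_solvNumberInv fun X hX => solvNumberInv_le_card_of_map (MonoidHom.inl H K) hX.sq_eq_one
    fun g => by
      obtain ⟨x, hx, hg⟩ := hX.covers g.1
      exact ⟨x, hx, fun h => hX.not_memSolvableNormal x hx (Prod.memSolvableNormal_iff.1 h).1,
        Prod.mem_Sol_iff.2 ⟨hg, mem_Sol_one _⟩⟩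

theorem solvNumberInv_prod_le_right : solvNumberInv (H × K) ≤ solvNumberInv K :=
  le_solvNumberInv fun X hX => solvNumberInv_le_card_of_map (MonoidHom.inr H K) hX.sq_eq_one
    fun g => by
      obtain ⟨x, hx, hg⟩ := hX.covers g.2
      exact ⟨x, hx, fun h => hX.not_memSolvableNormal x hx (Prod.memSolvableNormal_iff.1 h).2,
        Prod.mem_Sol_iff.2 ⟨mem_Sol_one _, hg⟩⟩

theorem min_solvNumberInv_le_prod :
    min (solvNumberInv H) (solvNumberInv K) ≤ solvNumberInv (H × K) := by
  refine le_solvNumberInv fun X hX => ?_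
  by_cases hfst : ∀ g : H, ∃ p ∈ X, ¬MemSolvableNormal p.1 ∧ g ∈ Sol p.1
  · exact min_le_left _ _ |>.trans
      (solvNumberInv_le_card_of_map (MonoidHom.fst H K) hX.sq_eq_one hfst)
  push Not at hfst
  obtain ⟨g₀, hg₀⟩ := hfst
  refine min_le_right _ _ |>.trans
    (solvNumberInv_le_card_of_map (MonoidHom.snd H K) hX.sq_eq_one fun k => ?_)
  obtain ⟨p, hp, hsol⟩ := hX.covers (g₀, k)
  obtain ⟨h₁, h₂⟩ := Prod.mem_Sol_iff.1 hsol
  have hrad₁ : MemSolvableNormal p.1 := by_contra fun h => hg₀ p hp h h₁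
  exact ⟨p, hp, fun hrad₂ => hX.not_memSolvableNormal p hp
    (Prod.memSolvableNormal_iff.2 ⟨hrad₁, hrad₂⟩), h₂⟩

theorem solvNumberInv_le_prod_of_isSolvable [Group.IsSolvable K] :
    solvNumberInv H ≤ solvNumberInv (H × K) := by
  refine le_solvNumberInv fun X hX => ?_
  refine solvNumberInv_le_card_of_map (MonoidHom.fst H K) hX.sq_eq_one fun g => ?_
  obtain ⟨p, hp, hsol⟩ := hX.covers (g, 1)
  exact ⟨p, hp, fun hrad => hX.not_memSolvableNormal p hp
    (Prod.memSolvableNormal_iff.2 ⟨hrad, memSolvableNormal_of_isSolvable p.2⟩),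
    (Prod.mem_Sol_iff.1 hsol).1⟩

end Product

theorem stmt11_general {H K : Type*} [Group H] [Group K] :
    (IsSolvable K → solvNumberInv (H × K) = solvNumberInv H) ∧
    (¬IsSolvable K →
      solvNumberInv (H × K) = min (solvNumberInv H) (solvNumberInv K)) :=
  ⟨fun hK => have : Group.IsSolvable K := hK
    le_antisymm solvNumberInv_prod_le_left solvNumberInv_le_prod_of_isSolvable,
    fun _ => le_antisymm (le_min solvNumberInv_prod_le_left solvNumberInv_prod_le_right)
      min_solvNumberInv_le_prod⟩

/-- For `G = H × K` with `H` nonsolvable admitting an involutionary solvabilizer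
covering: (1) if `K` is solvable then `α_inv(G) = α_inv(H)`;
(2) if `K` is nonsolvable then `α_inv(G) = min {α_inv(H), α_inv(K)}`
(with value `∞` when no involutionary covering exists). -/
theorem stmt11 {H K : Type*} [Group H] [Group K] [Finite H] [Finite K]
    (hH : ¬IsSolvable H)
    (hcov : ∃ X : Finset H, (∀ x ∈ X, orderOf x = 2) ∧
      (∀ x ∈ X, ¬∃ N : Subgroup H, N.Normal ∧ IsSolvable ↥N ∧ x ∈ N) ∧
      ∀ g : H, ∃ x ∈ X, g ∈ Sol x) :
    (IsSolvable K → solvNumberInv (H × K) = solvNumberInv H) ∧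
    (¬IsSolvable K →
      solvNumberInv (H × K) = min (solvNumberInv H) (solvNumberInv K)) :=
  stmt11_general
end

section
/- Let H be a finite nonsolvable group, n a positive integer, K a subgroup of the symmetric group Sₙ, and let G = H ≀ K be the wreath product, i.e., the semidirect product of the base group B = Hⁿ (functions from an n-element set to H) with K acting by permuting the coordinates. Then the solvabilizer number of G is at most that of H: α(G) ≤ α(H). -/
open scoped MatrixGroups
open scoped Pointwise

set_option maxHeartbeats 1000000

/-- The action of a permutation of `Fin n` on the base group `Hⁿ` of a wreath product,
permuting the coordinates. -/
def permMulAut (n : ℕ) (H : Type*) [Group H] : Equiv.Perm (Fin n) →* MulAut (Fin n → H) where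
  toFun σ :=
    { toFun := fun f => f ∘ σ.symm
      invFun := fun f => f ∘ σ
      left_inv := fun f => by funext i; simp
      right_inv := fun f => by funext i; simp
      map_mul' := fun f g => rfl }
  map_one' := by ext f i; rfl
  map_mul' := fun σ τ => by ext f i; rfl



section Helpers

variable {A B : Type*} [Group A] [Group B]

lemma solvable_of_mulEquiv (e : A ≃* B) (h : IsSolvable A) : IsSolvable B := by
  haveI : Group.IsSolvable A := h
  exact solvable_of_surjective (f := e.toMonoidHom) e.surjective

lemma solvable_of_le {S T : Subgroup A} (h : S ≤ T) (hT : IsSolvable ↥T) : IsSolvable ↥S := by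
  haveI : Group.IsSolvable ↥T := hT
  exact solvable_of_solvable_injective (Subgroup.inclusion_injective h)

lemma solvable_of_kerRange (ψ : A →* B) (h1 : IsSolvable ↥ψ.ker) (h2 : IsSolvable ↥ψ.range) :
    IsSolvable A := by
  haveI : Group.IsSolvable ↥ψ.ker := h1; haveI : Group.IsSolvable ↥ψ.range := h2
  exact solvable_of_ker_le_range ψ.ker.subtype ψ.rangeRestrict
    (by rw [MonoidHom.ker_rangeRestrict, Subgroup.range_subtype])

lemma derived_bot_mono {k l : ℕ} (hk : derivedSeries A k = ⊥) (h : k ≤ l) :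
    derivedSeries A l = ⊥ := by
  induction l with
  | zero => have : k = 0 := Nat.le_zero.mp h; rwa [this] at hk
  | succ l ih =>
    rcases Nat.lt_or_ge k (l+1) with h' | h'
    · have := ih (Nat.lt_succ_iff.mp h')
      rw [derivedSeries_succ, this]
      simp
    · have : k = l + 1 := le_antisymm h h'
      rwa [this] at hk

lemma isSolvable_pi {ι : Type*} [Finite ι] (Gi : ι → Type*) [∀ i, Group (Gi i)]
    (h : ∀ i, IsSolvable (Gi i)) : IsSolvable (∀ i, Gi i) := by
  cases nonempty_fintype ι
  have h' : ∀ i, ∃ m, derivedSeries (Gi i) m = ⊥ := fun i => (h i).solvable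
  choose m hm using h'
  refine ⟨⟨Finset.univ.sup m, ?_⟩⟩
  rw [eq_bot_iff]
  intro x hx
  have hx1 : ∀ i, x i ∈ (⊥ : Subgroup (Gi i)) := by
    intro i
    have h2 := map_derivedSeries_le_derivedSeries (Pi.evalMonoidHom Gi i) (Finset.univ.sup m)
    have h3 : x i ∈ Subgroup.map (Pi.evalMonoidHom Gi i)
        (derivedSeries (∀ j, Gi j) (Finset.univ.sup m)) :=
      Subgroup.mem_map_of_mem _ hx
    have h4 := h2 h3
    rwa [derived_bot_mono (hm i) (Finset.le_sup (Finset.mem_univ i))] at h4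
  have : x = 1 := funext fun i => by simpa [Subgroup.mem_bot] using hx1 i
  simp [Subgroup.mem_bot, this]

lemma sol_of_mem_zpowers {a b : A} (h : b ∈ Subgroup.zpowers a) :
    IsSolvable ↥(Subgroup.closure ({a, b} : Set A)) := by
  have hle : Subgroup.closure ({a, b} : Set A) ≤ Subgroup.zpowers a := by
    rw [Subgroup.closure_le]
    rintro c hc
    simp only [Set.mem_insert_iff, Set.mem_singleton_iff] at hc
    rcases hc with rfl | rfl
    · exact Subgroup.mem_zpowers c
    · exact h
  exact solvable_of_le hle (isSolvable_of_comm (fun x y => mul_comm' x y))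

lemma solvable_subgroupOf (R T : Subgroup A) (hR : IsSolvable ↥R) :
    IsSolvable ↥(R.subgroupOf T) := by
  haveI : Group.IsSolvable ↥R := hR
  let F : ↥(R.subgroupOf T) →* ↥R :=
    { toFun := fun t => ⟨((t : ↥T) : A), t.2⟩
      map_one' := rfl
      map_mul' := fun _ _ => rfl }
  have hF : Function.Injective F := by
    intro a b hab
    have h2 : ((a : ↥T) : A) = ((b : ↥T) : A) := congrArg (fun z : ↥R => (z : A)) hab
    apply Subtype.ext; apply Subtype.ext
    exact h2
  exact solvable_of_solvable_injective hF

lemma solvable_sup (N₁ N₂ : Subgroup A) (h1 : N₁.Normal) (h2 : N₂.Normal)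
    (s1 : IsSolvable ↥N₁) (s2 : IsSolvable ↥N₂) : IsSolvable ↥(N₁ ⊔ N₂) := by
  haveI := h1; haveI := h2; haveI : Group.IsSolvable ↥N₁ := s1; haveI : Group.IsSolvable ↥N₂ := s2
  haveI : (N₂.subgroupOf (N₁ ⊔ N₂)).Normal := Subgroup.Normal.subgroupOf h2 _
  set χ := QuotientGroup.mk' (N₂.subgroupOf (N₁ ⊔ N₂))
  have hq : IsSolvable (↥(N₁ ⊔ N₂) ⧸ N₂.subgroupOf (N₁ ⊔ N₂)) := by
    apply solvable_of_surjective
      (f := χ.comp (Subgroup.inclusion (le_sup_left : N₁ ≤ N₁ ⊔ N₂)))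
    intro q
    obtain ⟨j, rfl⟩ := QuotientGroup.mk'_surjective _ q
    have hj : (j : A) ∈ (↑N₁ : Set A) * (↑N₂ : Set A) := by
      rw [← Subgroup.mul_normal]; exact j.2
    obtain ⟨a, ha, b, hb, hab⟩ := hj
    refine ⟨⟨a, ha⟩, ?_⟩
    show χ _ = χ j
    rw [QuotientGroup.mk'_eq_mk']
    refine ⟨⟨b, ?_⟩, ?_, ?_⟩
    · have : (b : A) ∈ N₁ ⊔ N₂ := Subgroup.mem_sup_right hb
      exact this
    · exact hb
    · apply Subtype.ext
      rw [Subgroup.coe_mul]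
      show (a : A) * (b : A) = (j : A)
      exact hab
  haveI : Group.IsSolvable (↥(N₁ ⊔ N₂) ⧸ N₂.subgroupOf (N₁ ⊔ N₂)) := hq
  haveI : Group.IsSolvable ↥χ.ker := by
    have hs := solvable_subgroupOf N₂ (N₁ ⊔ N₂) s2
    have hk : χ.ker = N₂.subgroupOf (N₁ ⊔ N₂) := QuotientGroup.ker_mk' _
    rw [hk]
    exact hs
  exact solvable_of_ker_le_range χ.ker.subtype χ (by rw [Subgroup.range_subtype])

lemma exists_radical [Finite A] (hA : ¬IsSolvable A) :
    ∃ R : Subgroup A, R.Normal ∧ IsSolvable ↥R ∧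
      (∀ N : Subgroup A, N.Normal → IsSolvable ↥N → N ≤ R) ∧ R ≠ ⊤ := by
  classical
  set 𝒮 : Set (Subgroup A) := {N | N.Normal ∧ IsSolvable ↥N} with h𝒮
  have hfin : 𝒮.Finite := Set.toFinite _
  have hbot : (⊥ : Subgroup A) ∈ 𝒮 := by
    refine ⟨inferInstance, ?_⟩
    exact isSolvable_of_comm (fun a b => Subsingleton.elim _ _)
  obtain ⟨R, hR, hmax⟩ := hfin.exists_maximalFor id 𝒮 ⟨⊥, hbot⟩
  refine ⟨R, hR.1, hR.2, ?_, ?_⟩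
  · intro N hN hNs
    haveI := hR.1; haveI := hN
    have hJ : R ⊔ N ∈ 𝒮 := ⟨Subgroup.sup_normal R N, solvable_sup R N hR.1 hN hR.2 hNs⟩
    have heq := hmax hJ le_sup_left
    simp only [id] at heq
    exact le_sup_right.trans heq
  · rintro rfl
    exact hA (solvable_of_mulEquiv Subgroup.topEquiv hR.2)

lemma setH_nonempty [Finite A] (hA : ¬IsSolvable A) :
    {m : ℕ | ∃ X : Finset A,
      (∀ x ∈ X, ¬∃ N : Subgroup A, N.Normal ∧ IsSolvable ↥N ∧ x ∈ N) ∧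
      X.card = m ∧ ∀ g : A, ∃ x ∈ X, g ∈ Sol x}.Nonempty := by
  classical
  obtain ⟨R, hRn, hRs, hRall, hRtop⟩ := exists_radical hA
  haveI := hRn
  haveI := Fintype.ofFinite A
  set X : Finset A :=
    Finset.univ.filter (fun x => ¬∃ N : Subgroup A, N.Normal ∧ IsSolvable ↥N ∧ x ∈ N) with hX
  refine ⟨X.card, X, ?_, rfl, ?_⟩
  · intro x hx
    exact (Finset.mem_filter.mp hx).2
  · intro g
    by_cases hg : ∃ N : Subgroup A, N.Normal ∧ IsSolvable ↥N ∧ g ∈ N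
    · obtain ⟨N, hN, hNs, hgN⟩ := hg
      have hgR : g ∈ R := hRall N hN hNs hgN
      have hx0 : ∃ x₀, x₀ ∉ R := by
        by_contra hcon
        push_neg at hcon
        exact hRtop ((Subgroup.eq_top_iff' R).mpr hcon)
      obtain ⟨x₀, hx₀⟩ := hx0
      have hx₀X : x₀ ∈ X := by
        rw [hX, Finset.mem_filter]
        exact ⟨Finset.mem_univ _, fun ⟨N', h1, h2, h3⟩ => hx₀ (hRall N' h1 h2 h3)⟩
      refine ⟨x₀, hx₀X, ?_⟩
      show IsSolvable ↥(Subgroup.closure ({x₀, g} : Set A))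
      set T := Subgroup.closure ({x₀, g} : Set A) with hT
      apply solvable_of_kerRange ((QuotientGroup.mk' R).comp T.subtype)
      · have hker : ((QuotientGroup.mk' R).comp T.subtype).ker = R.subgroupOf T := by
          ext t
          simp [MonoidHom.mem_ker, Subgroup.mem_subgroupOf, QuotientGroup.eq_one_iff]
        rw [hker]
        exact solvable_subgroupOf R T hRs
      · have hle : ((QuotientGroup.mk' R).comp T.subtype).range ≤
            Subgroup.zpowers ((x₀ : A ⧸ R)) := by
          rintro _ ⟨t, rfl⟩
          have hT2 : T ≤ Subgroup.comap (QuotientGroup.mk' R)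
              (Subgroup.zpowers ((x₀ : A ⧸ R))) := by
            rw [hT, Subgroup.closure_le]
            rintro c hc
            rw [SetLike.mem_coe, Subgroup.mem_comap]
            simp only [Set.mem_insert_iff, Set.mem_singleton_iff] at hc
            rcases hc with rfl | rfl
            · exact Subgroup.mem_zpowers _
            · have hgq : ((c : A ⧸ R)) = 1 := (QuotientGroup.eq_one_iff c).mpr hgR
              show ((c : A ⧸ R)) ∈ _
              rw [hgq]; exact one_mem _
          exact hT2 t.2
        exact solvable_of_le hle (inferInstance : Group.IsSolvable _)
    · refine ⟨g, ?_, ?_⟩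
      · rw [hX, Finset.mem_filter]; exact ⟨Finset.mem_univ _, hg⟩
      · show IsSolvable ↥(Subgroup.closure ({g, g} : Set A))
        exact sol_of_mem_zpowers (Subgroup.mem_zpowers g)

end Helpers

section Wreath

variable {H : Type*} [Group H] {n : ℕ}

def wp (f : Fin n → H) (σ : Equiv.Perm (Fin n)) (i0 : Fin n) : ℕ → H
  | 0 => 1
  | (k+1) => f ((σ ^ (k+1)) i0) * wp f σ i0 k

variable (f : Fin n → H) (σ : Equiv.Perm (Fin n)) (i0 : Fin n)

lemma wp_add (m : ℕ) (hm : (σ ^ m) i0 = i0) (k : ℕ) :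
    wp f σ i0 (k + m) = wp f σ i0 k * wp f σ i0 m := by
  induction k with
  | zero => rw [Nat.zero_add]; simp [wp]
  | succ k ih =>
    have hs : (σ ^ (k + m + 1)) i0 = (σ ^ (k + 1)) i0 := by
      have h1 : σ ^ (k + m + 1) = σ ^ (k + 1) * σ ^ m := by
        rw [← pow_add]; ring_nf
      rw [h1, Equiv.Perm.mul_apply, hm]
    have harith : k + 1 + m = (k + m) + 1 := by omega
    rw [harith]
    show f ((σ ^ (k + m + 1)) i0) * wp f σ i0 (k + m) = _
    rw [hs, ih]
    show _ = f ((σ ^ (k + 1)) i0) * wp f σ i0 k * wp f σ i0 m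
    rw [mul_assoc]

lemma wp_add_mul (m : ℕ) (hm : (σ ^ m) i0 = i0) (k j : ℕ) :
    wp f σ i0 (k + m * j) = wp f σ i0 k * (wp f σ i0 m) ^ j := by
  induction j with
  | zero => simp
  | succ j ih =>
    have harith : k + m * (j + 1) = (k + m * j) + m := by ring
    rw [harith, wp_add f σ i0 m hm, ih, pow_succ, mul_assoc]

def cnj (a : H) (U : Subgroup H) : Subgroup H := U.map (MulAut.conj a).toMonoidHom

lemma mem_cnj {a b : H} {U : Subgroup H} : b ∈ cnj a U ↔ a⁻¹ * b * a ∈ U := by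
  rw [cnj, Subgroup.mem_map_equiv, MulAut.conj_symm_apply]

lemma cnj_cnj (a b : H) (U : Subgroup H) : cnj a (cnj b U) = cnj (a * b) U := by
  ext c
  have he : ∀ c : H, b⁻¹ * (a⁻¹ * c * a) * b = (a*b)⁻¹ * c * (a*b) := by intro c; group
  simp only [mem_cnj, he]

lemma cnj_one (U : Subgroup H) : cnj 1 U = U := by
  ext c; simp [mem_cnj]

lemma cnj_self {a : H} {U : Subgroup H} (ha : a ∈ U) : cnj a U = U := by
  ext b
  rw [mem_cnj]
  constructor
  · intro h
    have h2 := mul_mem (mul_mem ha h) (inv_mem ha)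
    have he : a * (a⁻¹ * b * a) * a⁻¹ = b := by group
    rwa [he] at h2
  · intro h
    exact mul_mem (mul_mem (inv_mem ha) h) ha

lemma cnj_bot (a : H) : cnj a (⊥ : Subgroup H) = ⊥ := by
  ext c
  simp only [mem_cnj, Subgroup.mem_bot]
  constructor
  · intro h
    have := congrArg (fun z => a * z * a⁻¹) h
    simpa [mul_assoc] using this
  · rintro rfl; simp

lemma cnj_solvable (a : H) (U : Subgroup H) (h : IsSolvable ↥U) : IsSolvable ↥(cnj a U) :=
  solvable_of_mulEquiv
    (Subgroup.equivMapOfInjective U (MulAut.conj a).toMonoidHom (MulAut.conj a).injective) h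

lemma solvable_bot' : IsSolvable ↥(⊥ : Subgroup H) :=
  isSolvable_of_comm fun a b => Subsingleton.elim _ _

def LLa (L : Subgroup H) : Fin n → Subgroup H :=
  fun i => ⨆ (k : ℕ) (_ : (σ ^ k) i0 = i), cnj (wp f σ i0 k) L

variable (L : Subgroup H)

lemma cnj_wp_eq (hp : wp f σ i0 (Function.minimalPeriod ⇑σ i0) ∈ L)
    {k k' : ℕ} (h : (σ ^ k) i0 = (σ ^ k') i0) :
    cnj (wp f σ i0 k) L = cnj (wp f σ i0 k') L := by
  suffices haux : ∀ k k' : ℕ, k ≤ k' → (σ ^ k) i0 = (σ ^ k') i0 →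
      cnj (wp f σ i0 k) L = cnj (wp f σ i0 k') L by
    rcases le_total k k' with hle | hle
    · exact haux k k' hle h
    · exact (haux k' k hle h.symm).symm
  intro k k' hle h
  obtain ⟨m, rfl⟩ := Nat.exists_eq_add_of_le hle
  have hm : (σ ^ m) i0 = i0 := by
    have h1 : (σ ^ k) ((σ ^ m) i0) = (σ ^ k) i0 := by
      rw [← Equiv.Perm.mul_apply, ← pow_add]
      exact h.symm
    exact (σ ^ k).injective h1
  have hdvd : Function.minimalPeriod ⇑σ i0 ∣ m := by
    apply Function.IsPeriodicPt.minimalPeriod_dvd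
    show (⇑σ)^[m] i0 = i0
    rw [Equiv.Perm.iterate_eq_pow]
    exact hm
  obtain ⟨j, rfl⟩ := hdvd
  have hperd : (σ ^ Function.minimalPeriod ⇑σ i0) i0 = i0 := by
    have h3 := Function.isPeriodicPt_minimalPeriod ⇑σ i0
    have h4 : (⇑σ)^[Function.minimalPeriod ⇑σ i0] i0 = i0 := h3
    rwa [Equiv.Perm.iterate_eq_pow] at h4
  rw [wp_add_mul f σ i0 _ hperd k j, ← cnj_cnj, cnj_self (pow_mem hp j)]

lemma LL_eq (hp : wp f σ i0 (Function.minimalPeriod ⇑σ i0) ∈ L)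
    {k : ℕ} {i : Fin n} (hk : (σ ^ k) i0 = i) :
    LLa f σ i0 L i = cnj (wp f σ i0 k) L := by
  apply le_antisymm
  · apply iSup₂_le
    intro k' hk'
    exact (cnj_wp_eq f σ i0 L hp (hk'.trans hk.symm)).le
  · exact le_iSup₂ (f := fun (k : ℕ) (_ : (σ ^ k) i0 = i) => cnj (wp f σ i0 k) L) k hk

lemma LL_bot' {i : Fin n} (h : ∀ k : ℕ, (σ ^ k) i0 ≠ i) : LLa f σ i0 L i = ⊥ := by
  apply le_bot_iff.mp
  apply iSup₂_le
  intro k hk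
  exact absurd hk (h k)

lemma LL_i0 (hp : wp f σ i0 (Function.minimalPeriod ⇑σ i0) ∈ L) :
    LLa f σ i0 L i0 = L := by
  have h0 : (σ ^ 0) i0 = i0 := by simp
  rw [LL_eq f σ i0 L hp h0]
  show cnj (1 : H) L = L
  exact cnj_one L

lemma LL_solvable (hL : IsSolvable ↥L) (hp : wp f σ i0 (Function.minimalPeriod ⇑σ i0) ∈ L)
    (i : Fin n) : IsSolvable ↥(LLa f σ i0 L i) := by
  by_cases h : ∃ k : ℕ, (σ ^ k) i0 = i
  · obtain ⟨k, hk⟩ := h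
    rw [LL_eq f σ i0 L hp hk]
    exact cnj_solvable _ _ hL
  · push_neg at h
    rw [LL_bot' f σ i0 L h]
    exact solvable_bot'

lemma LL_star (hp : wp f σ i0 (Function.minimalPeriod ⇑σ i0) ∈ L)
    (hd : 0 < Function.minimalPeriod ⇑σ i0) (i : Fin n) :
    LLa f σ i0 L (σ i) = cnj (f (σ i)) (LLa f σ i0 L i) := by
  by_cases h : ∃ k : ℕ, (σ ^ k) i0 = i
  · obtain ⟨k, hk⟩ := h
    have h1 : (σ ^ (k+1)) i0 = σ i := by
      rw [pow_succ', Equiv.Perm.mul_apply, hk]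
    rw [LL_eq f σ i0 L hp hk, LL_eq f σ i0 L hp h1, cnj_cnj]
    show cnj (wp f σ i0 (k+1)) L = _
    congr 1
    show f ((σ ^ (k+1)) i0) * wp f σ i0 k = f (σ i) * wp f σ i0 k
    rw [h1]
  · push_neg at h
    have h2 : ∀ k : ℕ, (σ ^ k) i0 ≠ σ i := by
      intro k hk
      cases k with
      | zero =>
        apply h (Function.minimalPeriod ⇑σ i0 - 1)
        have hperd : (σ ^ Function.minimalPeriod ⇑σ i0) i0 = i0 := by
          have h3 := Function.isPeriodicPt_minimalPeriod ⇑σ i0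
          have h4 : (⇑σ)^[Function.minimalPeriod ⇑σ i0] i0 = i0 := h3
          rwa [Equiv.Perm.iterate_eq_pow] at h4
        have hd1 : Function.minimalPeriod ⇑σ i0 - 1 + 1 = Function.minimalPeriod ⇑σ i0 :=
          Nat.succ_pred_eq_of_pos hd
        apply σ.injective
        rw [← Equiv.Perm.mul_apply, ← pow_succ', hd1, hperd]
        simpa using hk
      | succ k =>
        apply h k
        apply σ.injective
        rw [← Equiv.Perm.mul_apply, ← pow_succ']
        exact hk
    rw [LL_bot' f σ i0 L h, LL_bot' f σ i0 L h2, cnj_bot]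

end Wreath


section WreathG

variable {H : Type*} [Group H] {n : ℕ} (K : Subgroup (Equiv.Perm (Fin n)))


lemma phi_apply (σK : K) (v : Fin n → H) (j : Fin n) :
    ((permMulAut n H).comp K.subtype σK) v j = v ((σK : Equiv.Perm (Fin n)).symm j) := rfl

lemma right_zpow (z : ((Fin n → H) ⋊[(permMulAut n H).comp K.subtype] K)) (k : ℤ) : (z ^ k).right = z.right ^ k := by
  have h := map_zpow (SemidirectProduct.rightHom
    (φ := (permMulAut n H).comp K.subtype)) z k
  simpa [SemidirectProduct.rightHom_eq_right] using h

def boxG (LL : Fin n → Subgroup H) : Subgroup ((Fin n → H) ⋊[(permMulAut n H).comp K.subtype] K) where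
  carrier := {s | s.right = 1 ∧ ∀ i, s.left i ∈ LL i}
  one_mem' := by
    refine ⟨rfl, fun i => ?_⟩
    show (1 : Fin n → H) i ∈ LL i
    exact one_mem _
  mul_mem' := by
    rintro s t ⟨hs1, hs2⟩ ⟨ht1, ht2⟩
    refine ⟨?_, fun i => ?_⟩
    · rw [SemidirectProduct.mul_right, hs1, ht1, mul_one]
    · rw [SemidirectProduct.mul_left, hs1, map_one]
      show (s.left * t.left) i ∈ LL i
      exact mul_mem (hs2 i) (ht2 i)
  inv_mem' := by
    rintro s ⟨hs1, hs2⟩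
    refine ⟨?_, fun i => ?_⟩
    · rw [SemidirectProduct.inv_right, hs1, inv_one]
    · rw [SemidirectProduct.inv_left, hs1, inv_one, map_one]
      show (s.left⁻¹) i ∈ LL i
      exact inv_mem (hs2 i)

lemma mem_boxG {LL : Fin n → Subgroup H} {s : ((Fin n → H) ⋊[(permMulAut n H).comp K.subtype] K)} :
    s ∈ boxG K LL ↔ s.right = 1 ∧ ∀ i, s.left i ∈ LL i := Iff.rfl

lemma conj_left_fun (g h : ((Fin n → H) ⋊[(permMulAut n H).comp K.subtype] K)) (h1 : h.right = 1) :
    (g * h * g⁻¹).left = fun i => g.left i *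
      h.left ((g.right : Equiv.Perm (Fin n)).symm i) * (g.left i)⁻¹ := by
  have hkey : (g * h * g⁻¹).left =
      g.left * ((permMulAut n H).comp K.subtype g.right) h.left * g.left⁻¹ := by
    rw [SemidirectProduct.mul_left, SemidirectProduct.mul_left, SemidirectProduct.mul_right,
      h1, mul_one, SemidirectProduct.inv_left]
    have h7 : ((permMulAut n H).comp K.subtype g.right)
        (((permMulAut n H).comp K.subtype g.right⁻¹) g.left⁻¹) = g.left⁻¹ := by
      rw [map_inv ((permMulAut n H).comp K.subtype) g.right]
      exact MulEquiv.apply_symm_apply _ _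
    rw [h7]
  funext i
  rw [hkey]
  show g.left i * (((permMulAut n H).comp K.subtype g.right) h.left) i * (g.left i)⁻¹ = _
  rw [phi_apply]

lemma g_mem_normalizer (LL : Fin n → Subgroup H) (g : ((Fin n → H) ⋊[(permMulAut n H).comp K.subtype] K))
    (star : ∀ i, LL ((g.right : Equiv.Perm (Fin n)) i)
      = cnj (g.left ((g.right : Equiv.Perm (Fin n)) i)) (LL i)) :
    g ∈ (Subgroup.normalizer (boxG K LL : Set ((Fin n → H) ⋊[(permMulAut n H).comp K.subtype] K))) := by
  rw [Subgroup.mem_normalizer_iff]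
  intro h
  constructor
  · rintro ⟨h1, h2⟩
    rw [mem_boxG]
    refine ⟨?_, fun i => ?_⟩
    · rw [SemidirectProduct.mul_right, SemidirectProduct.mul_right,
        SemidirectProduct.inv_right, h1, mul_one, mul_inv_cancel]
    · rw [conj_left_fun K g h h1]
      show g.left i * h.left ((g.right : Equiv.Perm (Fin n)).symm i) * (g.left i)⁻¹ ∈ LL i
      have hstar := star ((g.right : Equiv.Perm (Fin n)).symm i)
      rw [Equiv.apply_symm_apply] at hstar
      rw [hstar, mem_cnj]
      have hgr : (g.left i)⁻¹ * (g.left i *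
          h.left ((g.right : Equiv.Perm (Fin n)).symm i) * (g.left i)⁻¹) * g.left i
          = h.left ((g.right : Equiv.Perm (Fin n)).symm i) := by group
      rw [hgr]
      exact h2 _
  · rintro ⟨h1, h2⟩
    have hr : h.right = 1 := by
      rw [SemidirectProduct.mul_right, SemidirectProduct.mul_right,
        SemidirectProduct.inv_right] at h1
      exact conj_eq_one_iff.mp h1
    refine ⟨hr, fun i => ?_⟩
    have h2' := h2 ((g.right : Equiv.Perm (Fin n)) i)
    rw [conj_left_fun K g h hr] at h2'
    simp only at h2'
    rw [Equiv.symm_apply_apply] at h2'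
    rw [star i, mem_cnj] at h2'
    have hgr : (g.left ((g.right : Equiv.Perm (Fin n)) i))⁻¹ *
        (g.left ((g.right : Equiv.Perm (Fin n)) i) * h.left i *
          (g.left ((g.right : Equiv.Perm (Fin n)) i))⁻¹) *
        g.left ((g.right : Equiv.Perm (Fin n)) i) = h.left i := by group
    rwa [hgr] at h2'

def bigS (LL : Fin n → Subgroup H) (g : ((Fin n → H) ⋊[(permMulAut n H).comp K.subtype] K)) (hnorm : g ∈ (Subgroup.normalizer (boxG K LL : Set ((Fin n → H) ⋊[(permMulAut n H).comp K.subtype] K)))) :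
    Subgroup ((Fin n → H) ⋊[(permMulAut n H).comp K.subtype] K) where
  carrier := {s | ∃ k : ℤ, s * g ^ k ∈ boxG K LL}
  one_mem' := ⟨0, by simpa using (boxG K LL).one_mem⟩
  mul_mem' := by
    rintro s t ⟨k, hk⟩ ⟨l, hl⟩
    refine ⟨l + k, ?_⟩
    have hgk : g ^ (-k) ∈ (Subgroup.normalizer (boxG K LL : Set ((Fin n → H) ⋊[(permMulAut n H).comp K.subtype] K))) := Subgroup.zpow_mem _ hnorm (-k)
    have h2 : g ^ (-k) * (t * g ^ l) * (g ^ (-k))⁻¹ ∈ boxG K LL :=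
      ((Subgroup.mem_normalizer_iff.mp hgk) _).mp hl
    have he : s * t * g ^ (l + k) = (s * g ^ k) * (g ^ (-k) * (t * g ^ l) * (g ^ (-k))⁻¹) := by
      rw [zpow_add]
      group
    rw [he]
    exact mul_mem hk h2
  inv_mem' := by
    rintro s ⟨k, hk⟩
    refine ⟨-k, ?_⟩
    have hgk : g ^ k ∈ (Subgroup.normalizer (boxG K LL : Set ((Fin n → H) ⋊[(permMulAut n H).comp K.subtype] K))) := Subgroup.zpow_mem _ hnorm k
    have h2 : g ^ k * (s * g ^ k)⁻¹ * (g ^ k)⁻¹ ∈ boxG K LL :=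
      ((Subgroup.mem_normalizer_iff.mp hgk) _).mp (inv_mem hk)
    have he : s⁻¹ * g ^ (-k) = g ^ k * (s * g ^ k)⁻¹ * (g ^ k)⁻¹ := by
      group
    rw [he]
    exact h2

lemma g_pow_left (g : ((Fin n → H) ⋊[(permMulAut n H).comp K.subtype] K)) (i0 : Fin n) (m k : ℕ) :
    (g ^ m).left ((((g.right : Equiv.Perm (Fin n))) ^ (k + m)) i0)
      = wp g.left (g.right : Equiv.Perm (Fin n)) i0 (k + m)
        * (wp g.left (g.right : Equiv.Perm (Fin n)) i0 k)⁻¹ := by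
  set σ : Equiv.Perm (Fin n) := (g.right : Equiv.Perm (Fin n)) with hσ
  induction m with
  | zero =>
    rw [Nat.add_zero, pow_zero]
    rw [SemidirectProduct.one_left]
    show (1 : H) = _
    rw [mul_inv_cancel]
  | succ m ih =>
    have hps : g ^ (m + 1) = g * g ^ m := pow_succ' g m
    show (g ^ (m+1)).left ((σ ^ ((k + m) + 1)) i0) = wp g.left σ i0 ((k + m) + 1) * (wp g.left σ i0 k)⁻¹
    rw [hps, SemidirectProduct.mul_left, Pi.mul_apply]
    have hsymm : σ.symm ((σ ^ ((k + m) + 1)) i0) = (σ ^ (k + m)) i0 := by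
      have hstep : (σ ^ ((k + m) + 1)) i0 = σ ((σ ^ (k + m)) i0) := by
        rw [pow_succ', Equiv.Perm.mul_apply]
      rw [hstep, Equiv.symm_apply_apply]
    rw [phi_apply, hsymm, ih]
    show g.left ((σ ^ ((k + m) + 1)) i0) * (wp g.left σ i0 (k + m) * (wp g.left σ i0 k)⁻¹)
      = (g.left ((σ ^ ((k + m) + 1)) i0) * wp g.left σ i0 (k + m)) * (wp g.left σ i0 k)⁻¹
    rw [mul_assoc]

lemma mem_Sol_cover (i0 : Fin n) (g : ((Fin n → H) ⋊[(permMulAut n H).comp K.subtype] K)) (x : H)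
    (hx : IsSolvable ↥(Subgroup.closure ({x,
      wp g.left (g.right : Equiv.Perm (Fin n)) i0
        (Function.minimalPeriod ⇑(g.right : Equiv.Perm (Fin n)) i0)} : Set H))) :
    IsSolvable ↥(Subgroup.closure
      ({SemidirectProduct.inl (Pi.mulSingle i0 x), g} : Set
        ((Fin n → H) ⋊[(permMulAut n H).comp K.subtype] K))) := by
  classical
  set σ : Equiv.Perm (Fin n) := (g.right : Equiv.Perm (Fin n)) with hσ
  set d := Function.minimalPeriod ⇑σ i0 with hd
  set p := wp g.left σ i0 d with hp0
  set L := Subgroup.closure ({x, p} : Set H) with hL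
  have hxL : x ∈ L := Subgroup.subset_closure (Set.mem_insert _ _)
  have hpL : p ∈ L := Subgroup.subset_closure (Set.mem_insert_of_mem _ rfl)
  have hdpos : 0 < d := by
    apply Function.IsPeriodicPt.minimalPeriod_pos (orderOf_pos σ)
    show (⇑σ)^[orderOf σ] i0 = i0
    rw [Equiv.Perm.iterate_eq_pow, pow_orderOf_eq_one]
    rfl
  set LL := LLa g.left σ i0 L with hLL
  have star : ∀ i, LL (σ i) = cnj (g.left (σ i)) (LL i) :=
    LL_star g.left σ i0 L hpL hdpos
  have hnorm : g ∈ (Subgroup.normalizer (boxG K LL : Set ((Fin n → H) ⋊[(permMulAut n H).comp K.subtype] K))) := g_mem_normalizer K LL g star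
  set S := bigS K LL g hnorm with hS
  have hgS : g ∈ S := by
    refine ⟨-1, ?_⟩
    rw [zpow_neg, zpow_one, mul_inv_cancel]
    exact (boxG K LL).one_mem
  have haS : SemidirectProduct.inl (Pi.mulSingle i0 x) ∈ S := by
    refine ⟨0, ?_⟩
    rw [zpow_zero, mul_one, mem_boxG]
    refine ⟨SemidirectProduct.right_inl _, fun i => ?_⟩
    rw [SemidirectProduct.left_inl]
    rcases eq_or_ne i i0 with rfl | hne
    · rw [Pi.mulSingle_eq_same, hLL, LL_i0 g.left σ _ L hpL]
      exact hxL
    · rw [Pi.mulSingle_eq_of_ne hne]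
      exact one_mem _
  have hSolv : IsSolvable ↥S := by
    set ψ : ↥S →* K := SemidirectProduct.rightHom.comp S.subtype with hψ
    have hker_right : ∀ q : ↥ψ.ker, (((q : ↥S) : ((Fin n → H) ⋊[(permMulAut n H).comp K.subtype] K))).right = 1 := by
      intro q
      exact q.2
    apply solvable_of_kerRange ψ
    · -- kernel solvable
      set o : ℕ := orderOf g.right with ho
      have hgor : (g ^ (o : ℤ)).right = 1 := by
        rw [right_zpow, zpow_natCast, pow_orderOf_eq_one]
      set b0 : Fin n → H := (g ^ (o : ℤ)).left with hb0
      have hgo : g ^ (o : ℤ) = SemidirectProduct.inl b0 := by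
        apply SemidirectProduct.ext
        · rw [SemidirectProduct.left_inl]
        · rw [SemidirectProduct.right_inl, hgor]
      set M : Fin n → Subgroup H := fun i => LL i ⊔ Subgroup.zpowers (b0 i) with hM
      have hMsolv : ∀ i, IsSolvable ↥(M i) := by
        intro i
        by_cases horb : ∃ k : ℕ, (σ ^ k) i0 = i
        · obtain ⟨k0, hk0⟩ := horb
          have hsig_o : (σ ^ o) i0 = i0 := by
            have hcoe : (σ ^ o) = ((g.right ^ o : K) : Equiv.Perm (Fin n)) := by
              rw [hσ, ← SubgroupClass.coe_pow]
            rw [hcoe, pow_orderOf_eq_one]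
            rfl
          have hb0mem : b0 i ∈ LL i := by
            have hiko : (σ ^ (k0 + o)) i0 = i := by
              rw [pow_add, Equiv.Perm.mul_apply, hsig_o, hk0]
            have hfl := g_pow_left K g i0 o k0
            have hb0i : b0 i = wp g.left σ i0 (k0 + o) * (wp g.left σ i0 k0)⁻¹ := by
              rw [hb0, zpow_natCast, ← hiko]
              exact hfl
            have hdvd : d ∣ o := by
              apply Function.IsPeriodicPt.minimalPeriod_dvd
              show (⇑σ)^[o] i0 = i0
              rw [Equiv.Perm.iterate_eq_pow]
              exact hsig_o
            obtain ⟨j, hj⟩ := hdvd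
            have hperd : (σ ^ d) i0 = i0 := by
              have h3 := Function.isPeriodicPt_minimalPeriod ⇑σ i0
              have h4 : (⇑σ)^[d] i0 = i0 := h3
              rwa [Equiv.Perm.iterate_eq_pow] at h4
            rw [hLL, LL_eq g.left σ i0 L hpL hk0, mem_cnj, hb0i, hj,
              wp_add_mul g.left σ i0 d hperd k0 j]
            have hgr : (wp g.left σ i0 k0)⁻¹ * ((wp g.left σ i0 k0 * (wp g.left σ i0 d) ^ j) *
                (wp g.left σ i0 k0)⁻¹) * wp g.left σ i0 k0 = (wp g.left σ i0 d) ^ j := by group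
            rw [hgr]
            exact pow_mem hpL j
          have hzle : Subgroup.zpowers (b0 i) ≤ LL i := Subgroup.zpowers_le.mpr hb0mem
          show IsSolvable ↥(LL i ⊔ Subgroup.zpowers (b0 i))
          rw [sup_eq_left.mpr hzle]
          exact LL_solvable g.left σ i0 L hx hpL i
        · push_neg at horb
          show IsSolvable ↥(LL i ⊔ Subgroup.zpowers (b0 i))
          rw [hLL, LL_bot' g.left σ i0 L horb, bot_sup_eq]
          exact isSolvable_of_comm (fun x y => mul_comm' x y)
      have hmem2 : ∀ s : ((Fin n → H) ⋊[(permMulAut n H).comp K.subtype] K), s ∈ S → s.right = 1 → ∀ i, s.left i ∈ M i := by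
        rintro s ⟨k, hk⟩ hsr i
        have hk1 : s.right * (g ^ k).right = 1 := by
          rw [← SemidirectProduct.mul_right]
          exact (mem_boxG K).mp hk |>.1
        have hgk1 : (g ^ k).right = 1 := by rwa [hsr, one_mul] at hk1
        have hgrk : g.right ^ k = 1 := by
          rw [← right_zpow]
          exact hgk1
        obtain ⟨j, hj⟩ : ((o : ℤ)) ∣ k := orderOf_dvd_iff_zpow_eq_one.mpr hgrk
        have hgkj : g ^ k = SemidirectProduct.inl (b0 ^ j) := by
          rw [hj, zpow_mul, hgo, ← map_zpow]
        have hsg : s = (s * g ^ k) * (SemidirectProduct.inl (b0 ^ j))⁻¹ := by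
          rw [← hgkj, mul_inv_cancel_right]
        have hleft : s.left i = (s * g ^ k).left i * ((b0 i) ^ j)⁻¹ := by
          conv_lhs => rw [hsg]
          rw [SemidirectProduct.mul_left, ((mem_boxG K).mp hk).1, map_one,
            ← map_inv SemidirectProduct.inl, SemidirectProduct.left_inl]
          show ((s * g ^ k).left * (b0 ^ j)⁻¹) i = _
          rw [Pi.mul_apply, Pi.inv_apply]
          congr 1
        rw [hleft]
        refine mul_mem ?_ ?_
        · exact Subgroup.mem_sup_left (((mem_boxG K).mp hk).2 i)
        · refine Subgroup.mem_sup_right (inv_mem ?_)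
          exact ⟨j, rfl⟩
      let Θ : ↥ψ.ker →* (∀ i, ↥(M i)) :=
        { toFun := fun q => fun i =>
            ⟨(((q : ↥S) : ((Fin n → H) ⋊[(permMulAut n H).comp K.subtype] K))).left i, hmem2 _ (q : ↥S).2 (hker_right q) i⟩
          map_one' := by
            funext i
            apply Subtype.ext
            show ((((1 : ↥ψ.ker) : ↥S) : ((Fin n → H) ⋊[(permMulAut n H).comp K.subtype] K))).left i = 1
            rw [OneMemClass.coe_one, OneMemClass.coe_one, SemidirectProduct.one_left]
            rfl
          map_mul' := by
            intro q r
            funext i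
            apply Subtype.ext
            show (((((q * r) : ↥ψ.ker) : ↥S) : ((Fin n → H) ⋊[(permMulAut n H).comp K.subtype] K))).left i = _
            rw [Subgroup.coe_mul, Subgroup.coe_mul, SemidirectProduct.mul_left,
              hker_right q, map_one]
            show ((((q : ↥S) : ((Fin n → H) ⋊[(permMulAut n H).comp K.subtype] K))).left * (((r : ↥S) : ((Fin n → H) ⋊[(permMulAut n H).comp K.subtype] K))).left) i = _
            rw [Pi.mul_apply]
            rfl }
      have hΘinj : Function.Injective Θ := by
        intro q r hqr
        have hleft : (((q : ↥S) : ((Fin n → H) ⋊[(permMulAut n H).comp K.subtype] K))).left = (((r : ↥S) : ((Fin n → H) ⋊[(permMulAut n H).comp K.subtype] K))).left := by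
          funext i
          have := congrFun hqr i
          exact congrArg Subtype.val this
        have hright : (((q : ↥S) : ((Fin n → H) ⋊[(permMulAut n H).comp K.subtype] K))).right = (((r : ↥S) : ((Fin n → H) ⋊[(permMulAut n H).comp K.subtype] K))).right := by
          rw [hker_right q, hker_right r]
        apply Subtype.ext
        apply Subtype.ext
        exact SemidirectProduct.ext hleft hright
      haveI hpi : Group.IsSolvable (∀ i, ↥(M i)) := isSolvable_pi _ hMsolv
      exact solvable_of_solvable_injective hΘinj
    · -- range solvable
      have hle : ψ.range ≤ Subgroup.zpowers g.right := by
        rintro y ⟨⟨s, k, hk⟩, rfl⟩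
        have hsr : s.right * g.right ^ k = 1 := by
          have h6 := ((mem_boxG K).mp hk).1
          rwa [SemidirectProduct.mul_right, right_zpow] at h6
        have hseq : s.right = (g.right ^ k)⁻¹ := eq_inv_of_mul_eq_one_left hsr
        have hψval : ψ ⟨s, ⟨k, hk⟩⟩ = s.right := rfl
        rw [hψval, hseq]
        exact Subgroup.mem_zpowers_iff.mpr ⟨-k, by rw [zpow_neg]⟩
      exact solvable_of_le hle (inferInstance : Group.IsSolvable _)
  have hle2 : Subgroup.closure
      ({SemidirectProduct.inl (Pi.mulSingle i0 x), g} : Set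
        ((Fin n → H) ⋊[(permMulAut n H).comp K.subtype] K)) ≤ S := by
    rw [Subgroup.closure_le]
    rintro c hc
    simp only [Set.mem_insert_iff, Set.mem_singleton_iff] at hc
    rcases hc with rfl | rfl
    · exact haS
    · exact hgS
  exact solvable_of_le hle2 hSolv

lemma not_rad (i0 : Fin n) {x : H}
    (hx : ¬∃ N : Subgroup H, N.Normal ∧ IsSolvable ↥N ∧ x ∈ N) :
    ¬∃ N : Subgroup ((Fin n → H) ⋊[(permMulAut n H).comp K.subtype] K),
      N.Normal ∧ IsSolvable ↥N ∧ SemidirectProduct.inl (Pi.mulSingle i0 x) ∈ N := by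
  rintro ⟨N, hNn, hNs, hmem⟩
  apply hx
  classical
  set NB : Subgroup (Fin n → H) := N.comap SemidirectProduct.inl with hNB
  set R : Subgroup H := NB.map (Pi.evalMonoidHom (fun _ => H) i0) with hR
  refine ⟨R, ?_, ?_, ?_⟩
  · constructor
    intro h hmemR c
    rw [hR, Subgroup.mem_map] at hmemR ⊢
    obtain ⟨v, hv, rfl⟩ := hmemR
    refine ⟨Pi.mulSingle i0 c * v * (Pi.mulSingle i0 c)⁻¹, ?_, ?_⟩
    · show SemidirectProduct.inl (Pi.mulSingle i0 c * v * (Pi.mulSingle i0 c)⁻¹) ∈ N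
      rw [map_mul, map_mul, map_inv]
      exact hNn.conj_mem _ hv _
    · have heval : ∀ w : Fin n → H, (Pi.evalMonoidHom (fun _ => H) i0) w = w i0 :=
        fun w => rfl
      rw [heval, heval, Pi.mul_apply, Pi.mul_apply, Pi.inv_apply, Pi.mulSingle_eq_same]
  · have hNBs : IsSolvable ↥NB := by
      haveI : Group.IsSolvable ↥N := hNs
      let F : ↥NB →* ↥N :=
        { toFun := fun b => ⟨SemidirectProduct.inl (b : Fin n → H), b.2⟩
          map_one' := by apply Subtype.ext; exact map_one SemidirectProduct.inl
          map_mul' := fun a b => by apply Subtype.ext; exact map_mul _ _ _ }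
      have hF : Function.Injective F := by
        intro a b hab
        have h2 := congrArg (fun z : ↥N => (z : ((Fin n → H) ⋊[(permMulAut n H).comp K.subtype] K))) hab
        exact Subtype.ext (SemidirectProduct.inl_injective h2)
      exact solvable_of_solvable_injective hF
    haveI : Group.IsSolvable ↥NB := hNBs
    let F2 : ↥NB →* ↥R :=
      { toFun := fun b => ⟨(b : Fin n → H) i0, Subgroup.mem_map_of_mem _ b.2⟩
        map_one' := rfl
        map_mul' := fun a b => rfl }
    have hF2 : Function.Surjective F2 := by
      rintro ⟨r, v, hv, rfl⟩
      exact ⟨⟨v, hv⟩, rfl⟩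
    exact solvable_of_surjective hF2
  · exact ⟨Pi.mulSingle i0 x, hmem, by simp⟩

end WreathG

/-- For the wreath product `G = H ≀ K = Hⁿ ⋊ K` (with `H` finite nonsolvable and
`K ≤ Sₙ` permuting the coordinates), `α(G) ≤ α(H)`. -/
theorem stmt12 {H : Type*} [Group H] [Finite H] (hH : ¬IsSolvable H)
    (n : ℕ) (hn : 0 < n) (K : Subgroup (Equiv.Perm (Fin n))) :
    solvNumber ((Fin n → H) ⋊[(permMulAut n H).comp K.subtype] K) ≤ solvNumber H := by
  classical
  have hSHne := setH_nonempty hH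
  have hmem := Nat.sInf_mem hSHne
  obtain ⟨X, hX1, hX2, hX3⟩ := hmem
  set i0 : Fin n := ⟨0, hn⟩ with hi0
  set emb : H → ((Fin n → H) ⋊[(permMulAut n H).comp K.subtype] K) :=
    fun x => SemidirectProduct.inl (Pi.mulSingle i0 x) with hemb
  have hembinj : Function.Injective emb := by
    intro a b hab
    have h2 := SemidirectProduct.inl_injective hab
    have h3 := congrFun h2 i0
    rwa [Pi.mulSingle_eq_same, Pi.mulSingle_eq_same] at h3
  set X' : Finset ((Fin n → H) ⋊[(permMulAut n H).comp K.subtype] K) := X.image emb with hX'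
  apply Nat.sInf_le
  refine ⟨X', ?_, ?_, ?_⟩
  · intro x' hx'
    rw [hX', Finset.mem_image] at hx'
    obtain ⟨x, hxX, rfl⟩ := hx'
    exact not_rad K i0 (hX1 x hxX)
  · rw [hX', Finset.card_image_of_injective _ hembinj]
    exact hX2
  · intro gG
    obtain ⟨x, hxX, hxp⟩ := hX3 (wp gG.left (gG.right : Equiv.Perm (Fin n)) i0
      (Function.minimalPeriod ⇑(gG.right : Equiv.Perm (Fin n)) i0))
    refine ⟨emb x, Finset.mem_image_of_mem _ hxX, ?_⟩
    show IsSolvable ↥(Subgroup.closure ({emb x, gG} : Set _))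
    exact mem_Sol_cover K i0 gG x hxp
end

section
/- Let q be a prime power with q ≡ 1 (mod 4) and let G = PSL(2, q) be the projective special linear group of degree 2 over the field with q elements. Then the solvabilizer number of G satisfies α(G) ≤ q. -/
open scoped MatrixGroups

namespace Stmt18Aux

open Subgroup
open scoped commutatorElement

variable {F : Type*} [Field F]

/-- upper unipotent -/
def um (b : F) : SL(2,F) := ⟨!![1, b; 0, 1], by simp [Matrix.det_fin_two_of]⟩
/-- lower unipotent -/
def lm (b : F) : SL(2,F) := ⟨!![1, 0; b, 1], by simp [Matrix.det_fin_two_of]⟩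
/-- Weyl element -/
def wm : SL(2,F) := ⟨!![0, 1; -1, 0], by simp [Matrix.det_fin_two_of]⟩
/-- the involutions used for the covering -/
def tm (i y : F) (hi : i * i = -1) : SL(2,F) :=
  ⟨!![i, y; 0, -i], by rw [Matrix.det_fin_two_of]; linear_combination -hi⟩

@[simp] lemma um_coe (b : F) : (um b).1 = !![1, b; 0, 1] := rfl
@[simp] lemma lm_coe (b : F) : (lm b).1 = !![1, 0; b, 1] := rfl
@[simp] lemma wm_coe : (wm : SL(2,F)).1 = !![0, 1; -1, 0] := rfl
@[simp] lemma tm_coe (i y : F) (hi : i * i = -1) : (tm i y hi).1 = !![i, y; 0, -i] := rfl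

lemma det_rel (A : SL(2,F)) : A.1 0 0 * A.1 1 1 - A.1 0 1 * A.1 1 0 = 1 := by
  rw [← Matrix.det_fin_two]; exact A.2

lemma sq_coe_eq_neg_one {A : SL(2,F)} (h : A.1 0 0 + A.1 1 1 = 0) :
    A.1 * A.1 = -1 := by
  have hd := det_rel A
  ext i j
  fin_cases i <;> fin_cases j <;>
    simp [Matrix.mul_apply, Fin.sum_univ_two, Matrix.one_apply] <;>
    first
      | linear_combination A.1 0 0 * h - hd
      | linear_combination A.1 0 1 * h
      | linear_combination A.1 1 0 * h
      | linear_combination A.1 1 1 * h - hd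
      | linear_combination (A.1 1 1 - A.1 0 0) * h

lemma mem_center_of_coe_eq_neg_one {A : SL(2,F)} (h : A.1 = -1) :
    A ∈ Subgroup.center (SL(2,F)) := by
  rw [Subgroup.mem_center_iff]
  intro B
  apply Subtype.ext
  rw [Matrix.SpecialLinearGroup.coe_mul, Matrix.SpecialLinearGroup.coe_mul, h]
  simp

/-- the projection SL → PSL -/
def pr : SL(2,F) →* PSL(2,F) := QuotientGroup.mk' _

lemma pr_surjective : Function.Surjective (pr (F := F)) :=
  QuotientGroup.mk'_surjective _

lemma pr_sq_eq_one {A : SL(2,F)} (hsq : A.1 * A.1 = -1) : pr A * pr A = 1 := by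
  rw [← _root_.map_mul, ← MonoidHom.mem_ker, pr, QuotientGroup.ker_mk']
  exact mem_center_of_coe_eq_neg_one (by rw [Matrix.SpecialLinearGroup.coe_mul, hsq])

/-- a group generated by an involution and an element it inverts is solvable -/
lemma solvable_closure_of_inv {G : Type*} [Group G] {a b : G} (ha : a * a = 1)
    (hab : a * b * a⁻¹ = b⁻¹) : IsSolvable ↥(Subgroup.closure ({a, b} : Set G)) := by
  have hainv : a⁻¹ = a := inv_eq_of_mul_eq_one_right ha
  set N := Subgroup.zpowers b with hNdef
  set K := Subgroup.closure ({a, b} : Set G) with hKdef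
  have hKle : K ≤ Subgroup.normalizer (N : Set G) := by
    rw [hKdef, Subgroup.closure_le]
    rintro x hx
    rw [SetLike.mem_coe]
    simp only [Set.mem_insert_iff, Set.mem_singleton_iff] at hx
    rcases hx with rfl | rfl
    · rw [Subgroup.mem_normalizer_iff]
      intro n
      have hc : ∀ k : ℤ, x * b ^ k * x⁻¹ = (b ^ k)⁻¹ := by
        intro k; rw [← conj_zpow, hab, inv_zpow]
      constructor
      · rintro ⟨k, rfl⟩
        exact ⟨-k, by show b ^ (-k) = x * b ^ k * x⁻¹; rw [hc, zpow_neg]⟩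
      · rintro ⟨k, hk⟩
        have hk' : b ^ k = x * n * x⁻¹ := hk
        refine ⟨-k, ?_⟩
        show b ^ (-k) = n
        have h2 : n = x * b ^ k * x⁻¹ := by
          rw [hk']
          have h3 : x * (x * n * x⁻¹) * x⁻¹ = (x * x) * n * (x * x)⁻¹ := by group
          rw [h3, ha]
          simp
        rw [h2, hc, zpow_neg]
    · exact Subgroup.le_normalizer (Subgroup.mem_zpowers _)
  have hN' : (N.subgroupOf K).Normal := by
    constructor
    intro n hn k
    rw [Subgroup.mem_subgroupOf] at hn ⊢
    have hk := hKle k.2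
    rw [Subgroup.mem_normalizer_iff] at hk
    simpa using (hk (↑n)).mp hn
  have haK : a ∈ K := Subgroup.subset_closure (by simp)
  set f := QuotientGroup.mk' (N.subgroupOf K) with hfdef
  have hbker : ∀ (h : b ∈ K), f ⟨b, h⟩ = 1 := by
    intro h
    rw [← MonoidHom.mem_ker, hfdef, QuotientGroup.ker_mk', Subgroup.mem_subgroupOf]
    exact Subgroup.mem_zpowers b
  have key : ∀ k : K, f k ∈ Subgroup.zpowers (f ⟨a, haK⟩) := by
    rintro ⟨x, hx⟩
    induction hx using Subgroup.closure_induction with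
    | mem z hz =>
      simp only [Set.mem_insert_iff, Set.mem_singleton_iff] at hz
      rcases hz with rfl | rfl
      · exact Subgroup.mem_zpowers _
      · rw [hbker]; exact one_mem _
    | one => rw [show ((⟨1, _⟩ : K)) = (1 : K) from rfl, _root_.map_one]; exact one_mem _
    | mul x y hx hy ihx ihy =>
      rw [show ((⟨x * y, _⟩ : K)) = (⟨x, hx⟩ : K) * ⟨y, hy⟩ from rfl, _root_.map_mul]
      exact mul_mem ihx ihy
    | inv x hx ih =>
      rw [show ((⟨x⁻¹, _⟩ : K)) = (⟨x, hx⟩ : K)⁻¹ from rfl, _root_.map_inv]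
      exact inv_mem ih
  haveI : Group.IsSolvable (K ⧸ N.subgroupOf K) := by
    apply isSolvable_of_comm
    intro p q
    obtain ⟨x, rfl⟩ := QuotientGroup.mk'_surjective _ p
    obtain ⟨y, rfl⟩ := QuotientGroup.mk'_surjective _ q
    obtain ⟨m, hm⟩ := Subgroup.mem_zpowers_iff.mp (key x)
    obtain ⟨n, hn⟩ := Subgroup.mem_zpowers_iff.mp (key y)
    rw [← hfdef, ← hm, ← hn, ← zpow_add, ← zpow_add, add_comm]
  haveI : Group.IsSolvable ↥(N.subgroupOf K) := by
    apply isSolvable_of_comm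
    intro x y
    obtain ⟨m, hm⟩ := Subgroup.mem_zpowers_iff.mp (Subgroup.mem_subgroupOf.mp x.2)
    obtain ⟨n, hn⟩ := Subgroup.mem_zpowers_iff.mp (Subgroup.mem_subgroupOf.mp y.2)
    apply Subtype.ext; apply Subtype.ext
    show ((x : K) : G) * ((y : K) : G) = ((y : K) : G) * ((x : K) : G)
    rw [← hm, ← hn, ← zpow_add, ← zpow_add, add_comm]
  exact solvable_of_ker_le_range (N.subgroupOf K).subtype f
    (by rw [hfdef, QuotientGroup.ker_mk', Subgroup.range_subtype])

/-- the Borel subgroup of upper triangular matrices -/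
def borel (F : Type*) [Field F] : Subgroup (SL(2,F)) where
  carrier := {A | A.1 1 0 = 0}
  one_mem' := by
    show (1 : SL(2,F)).1 1 0 = 0
    rw [Matrix.SpecialLinearGroup.coe_one]
    simp [Matrix.one_apply]
  mul_mem' := by
    intro A B hA hB
    show (A * B).1 1 0 = 0
    rw [Matrix.SpecialLinearGroup.coe_mul]
    simp only [Matrix.mul_apply, Fin.sum_univ_two]
    rw [show A.1 1 0 = 0 from hA, show B.1 1 0 = 0 from hB]
    ring
  inv_mem' := by
    intro A hA
    show (A⁻¹).1 1 0 = 0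
    rw [Matrix.SpecialLinearGroup.coe_inv, Matrix.adjugate_fin_two]
    simpa using hA

lemma mem_borel_iff {A : SL(2,F)} : A ∈ borel F ↔ A.1 1 0 = 0 := Iff.rfl

/-- map a Borel element to its top-left entry -/
def borelHom : (borel F) →* Fˣ where
  toFun A := ⟨A.1.1 0 0, A.1.1 1 1,
    by have hd := det_rel A.1; have h0 := mem_borel_iff.mp A.2
       linear_combination hd + A.1.1 0 1 * h0,
    by have hd := det_rel A.1; have h0 := mem_borel_iff.mp A.2
       linear_combination hd + A.1.1 0 1 * h0⟩
  map_one' := by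
    apply Units.ext
    show ((1 : SL(2,F)).1) 0 0 = 1
    rw [Matrix.SpecialLinearGroup.coe_one]; simp [Matrix.one_apply]
  map_mul' := by
    intro A B
    apply Units.ext
    show ((A.1 * B.1).1) 0 0 = (A.1.1 0 0) * (B.1.1 0 0)
    rw [Matrix.SpecialLinearGroup.coe_mul]
    simp only [Matrix.mul_apply, Fin.sum_univ_two]
    rw [show B.1.1 1 0 = 0 from mem_borel_iff.mp B.2]
    ring

lemma borel_solvable : IsSolvable ↥(borel F) := by
  haveI : Group.IsSolvable ↥(borelHom (F := F)).ker := by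
    apply isSolvable_of_comm
    intro x y
    have hx00 : (x.1.1.1) 0 0 = 1 := congrArg Units.val x.2
    have hy00 : (y.1.1.1) 0 0 = 1 := congrArg Units.val y.2
    have hx10 : (x.1.1.1) 1 0 = 0 := mem_borel_iff.mp x.1.2
    have hy10 : (y.1.1.1) 1 0 = 0 := mem_borel_iff.mp y.1.2
    have hx11 : (x.1.1.1) 1 1 = 1 := by
      have hd := det_rel x.1.1; rw [hx00, hx10] at hd; linear_combination hd
    have hy11 : (y.1.1.1) 1 1 = 1 := by
      have hd := det_rel y.1.1; rw [hy00, hy10] at hd; linear_combination hd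
    apply Subtype.ext; apply Subtype.ext; apply Subtype.ext
    show (x.1.1.1) * (y.1.1.1) = (y.1.1.1) * (x.1.1.1)
    ext i j
    fin_cases i <;> fin_cases j <;>
      simp [Matrix.mul_apply, Fin.sum_univ_two, hx00, hy00, hx10, hy10, hx11, hy11, add_comm]
  exact solvable_of_ker_le_range (borelHom (F := F)).ker.subtype borelHom
    (by rw [Subgroup.range_subtype])

/-- generators -/
def genS (F : Type*) [Field F] : Set (SL(2,F)) := Set.range um ∪ Set.range lm

lemma mem_closure_genS_of (A : SL(2,F)) (hc : A.1 1 0 ≠ 0) :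
    A ∈ Subgroup.closure (genS F) := by
  have hdet := det_rel A
  have hA : A = um ((A.1 0 0 - 1) / A.1 1 0) * lm (A.1 1 0) *
      um ((A.1 1 1 - 1) / A.1 1 0) := by
    apply Subtype.ext
    rw [Matrix.SpecialLinearGroup.coe_mul, Matrix.SpecialLinearGroup.coe_mul, um_coe, lm_coe, um_coe]
    ext i j
    fin_cases i <;> fin_cases j <;>
      simp [Matrix.mul_apply, Fin.sum_univ_two] <;> field_simp <;>
      first
        | ring1
        | linear_combination hdet
        | linear_combination -hdet
        | linear_combination A.1 1 0 * hdet
        | linear_combination -(A.1 1 0 * hdet)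
        | linear_combination (1 + A.1 1 0) * hdet
        | linear_combination (-(1 + A.1 1 0)) * hdet
        | linear_combination (A.1 1 0 * A.1 1 0) * hdet
        | linear_combination (-(A.1 1 0 * A.1 1 0)) * hdet
  rw [hA]
  exact mul_mem (mul_mem (Subgroup.subset_closure (Or.inl ⟨_, rfl⟩))
    (Subgroup.subset_closure (Or.inr ⟨_, rfl⟩)))
    (Subgroup.subset_closure (Or.inl ⟨_, rfl⟩))

lemma closure_genS_eq_top : Subgroup.closure (genS F) = ⊤ := by
  rw [eq_top_iff]
  rintro A -
  by_cases hc : A.1 1 0 = 0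
  · have h11 : A.1 1 1 ≠ 0 := by
      intro h
      have hd := det_rel A
      rw [hc, h] at hd
      simp at hd
    have hmem : A * lm 1 ∈ Subgroup.closure (genS F) := by
      apply mem_closure_genS_of
      rw [Matrix.SpecialLinearGroup.coe_mul, lm_coe]
      simp [Matrix.mul_apply, Fin.sum_univ_two, hc, h11]
    have hA : A = (A * lm 1) * (lm 1)⁻¹ := by group
    rw [hA]
    exact mul_mem hmem (inv_mem (Subgroup.subset_closure (Or.inr ⟨_, rfl⟩)))
  · exact mem_closure_genS_of A hc

lemma comm_eq {G : Type*} [Group G] {a b m : G} (h : a * b = m * (b * a)) :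
    ⁅a, b⁆ = m := by
  rw [commutatorElement_def, h]
  group

lemma commutator_sl_eq_top {lam : F} (h0 : lam ≠ 0) (h1 : lam * lam ≠ 1) :
    commutator (SL(2,F)) = ⊤ := by
  set dm : SL(2,F) := ⟨!![lam, 0; 0, lam⁻¹], by
    rw [Matrix.det_fin_two_of]; field_simp; simp⟩ with hdm
  have hu : ∀ b : F, um b ∈ commutator (SL(2,F)) := by
    intro b
    have hcom : ⁅dm, um (b / (lam * lam - 1))⁆ = um b := by
      apply comm_eq
      apply Subtype.ext
      rw [Matrix.SpecialLinearGroup.coe_mul, Matrix.SpecialLinearGroup.coe_mul, Matrix.SpecialLinearGroup.coe_mul]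
      have hne : lam * lam - 1 ≠ 0 := sub_ne_zero.mpr h1
      ext i j
      fin_cases i <;> fin_cases j <;>
        simp [Matrix.mul_apply, Fin.sum_univ_two, hdm] <;> field_simp <;> ring_nf <;> field_simp [show (-1 + lam ^ 2) ≠ 0 by intro h; apply hne; linear_combination h] <;> ring
    rw [← hcom, _root_.commutator_def]
    exact Subgroup.commutator_mem_commutator (Subgroup.mem_top _) (Subgroup.mem_top _)
  have hl : ∀ b : F, lm b ∈ commutator (SL(2,F)) := by
    intro b
    have hconj : lm b = wm * um (-b) * wm⁻¹ := by
      have h : wm * um (-b) = lm b * wm := by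
        apply Subtype.ext
        rw [Matrix.SpecialLinearGroup.coe_mul, Matrix.SpecialLinearGroup.coe_mul]
        ext i j
        fin_cases i <;> fin_cases j <;>
          simp [Matrix.mul_apply, Fin.sum_univ_two]
      rw [h]; group
    rw [hconj]
    haveI : (commutator (SL(2,F))).Normal := Subgroup.commutator_normal ⊤ ⊤
    exact this.conj_mem _ (hu (-b)) wm
  rw [eq_top_iff, ← closure_genS_eq_top, Subgroup.closure_le]
  rintro x hx
  rcases hx with ⟨b, rfl⟩ | ⟨b, rfl⟩
  · exact hu b
  · exact hl b

lemma sl_not_solvable {lam : F} (h0 : lam ≠ 0) (h1 : lam * lam ≠ 1) :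
    ¬ IsSolvable (SL(2,F)) := by
  intro h
  obtain ⟨n, hn⟩ := h.solvable
  have htop : ∀ m : ℕ, derivedSeries (SL(2,F)) m = ⊤ := by
    intro m
    induction m with
    | zero => rfl
    | succ k ih =>
      rw [derivedSeries_succ, ih, ← commutator_def, commutator_sl_eq_top h0 h1]
  have hbot : (⊤ : Subgroup (SL(2,F))) = ⊥ := by rw [← htop n, hn]
  have h1mem : um (1 : F) ∈ (⊥ : Subgroup (SL(2,F))) := by
    rw [← hbot]; exact Subgroup.mem_top _
  rw [Subgroup.mem_bot] at h1mem
  have := congrFun (congrFun (congrArg Subtype.val h1mem) 0) 1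
  rw [um_coe, Matrix.SpecialLinearGroup.coe_one] at this
  simp [Matrix.one_apply] at this

lemma psl_not_solvable {lam : F} (h0 : lam ≠ 0) (h1 : lam * lam ≠ 1) :
    ¬ IsSolvable (PSL(2,F)) := by
  intro h
  haveI : Group.IsSolvable _ := h
  haveI : Group.IsSolvable ↥(Subgroup.center (SL(2,F))) := by
    apply isSolvable_of_comm
    intro x y
    apply Subtype.ext
    exact (Subgroup.mem_center_iff.mp x.2 ↑y).symm
  exact sl_not_solvable h0 h1
    (solvable_of_ker_le_range (Subgroup.center (SL(2,F))).subtype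
      (QuotientGroup.mk' (Subgroup.center (SL(2,F))))
      (by rw [QuotientGroup.ker_mk', Subgroup.range_subtype]))

lemma normal_top {i y : F} (hi : i * i = -1) (hneg : (-1 : F) ≠ 1)
    {N : Subgroup (PSL(2,F))} (hN : N.Normal) (hx : pr (tm i y hi) ∈ N) : N = ⊤ := by
  have h2 : (2 : F) ≠ 0 := by
    intro h; apply hneg; linear_combination -h
  have hu : ∀ c : F, pr (um c) ∈ N := by
    intro c
    have hmat : um (c/2) * tm i y hi = um c * (tm i y hi * um (c/2)) := by
      apply Subtype.ext
      rw [Matrix.SpecialLinearGroup.coe_mul, Matrix.SpecialLinearGroup.coe_mul, Matrix.SpecialLinearGroup.coe_mul, um_coe, tm_coe, um_coe]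
      ext a b
      fin_cases a <;> fin_cases b <;>
        simp [Matrix.mul_apply, Fin.sum_univ_two] <;> field_simp <;> ring1
    have hcom : ⁅pr (um (c/2)), pr (tm i y hi)⁆ = pr (um c) := by
      apply comm_eq
      have h' := congrArg pr hmat
      rw [_root_.map_mul, _root_.map_mul, _root_.map_mul] at h'
      exact h'
    rw [← hcom, commutatorElement_def]
    exact mul_mem (hN.conj_mem _ hx _) (inv_mem hx)
  have hl : ∀ c : F, pr (lm c) ∈ N := by
    intro c
    have hmat : wm * um (-c) = lm c * wm := by
      apply Subtype.ext
      rw [Matrix.SpecialLinearGroup.coe_mul, Matrix.SpecialLinearGroup.coe_mul]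
      ext a b
      fin_cases a <;> fin_cases b <;>
        simp [Matrix.mul_apply, Fin.sum_univ_two]
    have hconj : pr (lm c) = pr wm * pr (um (-c)) * (pr wm)⁻¹ := by
      have h' := congrArg pr hmat
      rw [_root_.map_mul, _root_.map_mul] at h'
      rw [h']
      group
    rw [hconj]
    exact hN.conj_mem _ (hu (-c)) _
  rw [eq_top_iff]
  rintro g -
  obtain ⟨A, rfl⟩ := pr_surjective g
  have hA : A ∈ Subgroup.closure (genS F) := by
    rw [closure_genS_eq_top]; exact Subgroup.mem_top _
  have hmap : (Subgroup.closure (genS F)).map pr ≤ N := by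
    rw [MonoidHom.map_closure, Subgroup.closure_le]
    rintro z ⟨x, hxS, rfl⟩
    rw [SetLike.mem_coe]
    rcases hxS with ⟨b, rfl⟩ | ⟨b, rfl⟩
    · exact hu b
    · exact hl b
  exact hmap (Subgroup.mem_map_of_mem pr hA)

end Stmt18Aux

/-- For a prime power `q ≡ 1 (mod 4)`, `α(PSL(2, q)) ≤ q`. -/
theorem stmt18 {F : Type*} [Field F] [Fintype F] (q : ℕ) (hq : Fintype.card F = q)
    (hq1 : q % 4 = 1) :
    solvNumber PSL(2, F) ≤ q := by
  classical
  open Stmt18Aux Subgroup in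
  have hq2 : 2 ≤ q := hq ▸ Fintype.one_lt_card
  have hq5 : 5 ≤ q := by omega
  -- find i with i * i = -1
  obtain ⟨g, hg⟩ := IsCyclic.exists_generator (α := Fˣ)
  have hord : orderOf g = q - 1 := by
    rw [orderOf_eq_card_of_forall_mem_zpowers hg, Nat.card_eq_fintype_card, Fintype.card_units, hq]
  set k : ℕ := (q - 1) / 4 with hk
  have h4k : k * 4 = q - 1 := by omega
  have hi4 : (g ^ k) ^ 4 = 1 := by
    rw [← pow_mul]
    exact orderOf_dvd_iff_pow_eq_one.mp (by rw [hord, ← h4k])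
  have hi2 : (g ^ k) ^ 2 ≠ 1 := by
    intro h
    rw [← pow_mul] at h
    have hdvd := orderOf_dvd_of_pow_eq_one h
    rw [hord] at hdvd
    have := Nat.le_of_dvd (by omega) hdvd
    omega
  set i : F := ((g ^ k : Fˣ) : F) with hidef
  have hx4 : i ^ 4 = 1 := by
    rw [hidef, ← Units.val_pow_eq_pow_val, hi4, Units.val_one]
  have hx2 : i ^ 2 ≠ 1 := by
    intro h
    apply hi2
    apply Units.ext
    rw [Units.val_pow_eq_pow_val, Units.val_one]
    exact h
  have hi : i * i = -1 := by
    have hfac : (i ^ 2 - 1) * (i ^ 2 + 1) = 0 := by linear_combination hx4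
    rcases mul_eq_zero.mp hfac with h | h
    · exact absurd (by linear_combination h) hx2
    · linear_combination h
  have hneg : (-1 : F) ≠ 1 := fun hcon => hx2 (by rw [pow_two, hi, hcon])
  -- find lam with lam ≠ 0 and lam * lam ≠ 1
  obtain ⟨lam, hlam0, hlam1⟩ : ∃ lam : F, lam ≠ 0 ∧ lam * lam ≠ 1 := by
    by_contra hcon
    push_neg at hcon
    have hsub : (Finset.univ : Finset F) ⊆ {0, 1, -1} := by
      intro x _
      rcases eq_or_ne x 0 with h | h
      · simp [h]
      · have hxx := hcon x h
        have hfac : (x - 1) * (x + 1) = 0 := by linear_combination hxx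
        rcases mul_eq_zero.mp hfac with h' | h'
        · simp [show x = 1 by linear_combination h']
        · simp [show x = -1 by linear_combination h']
    have hcard := Finset.card_le_card hsub
    rw [Finset.card_univ, hq] at hcard
    have h3 : ({0, 1, -1} : Finset F).card ≤ 3 :=
      (Finset.card_insert_le _ _).trans (Nat.succ_le_succ
        ((Finset.card_insert_le _ _).trans (by simp)))
    omega
  -- the covering set
  set X : Finset (PSL(2,F)) := Finset.image (fun y : F => pr (tm i y hi)) Finset.univ with hX
  have hmem : X.card ∈ {n : ℕ | ∃ X : Finset (PSL(2,F)),
      (∀ x ∈ X, ¬∃ N : Subgroup (PSL(2,F)), N.Normal ∧ IsSolvable ↥N ∧ x ∈ N) ∧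
      X.card = n ∧ ∀ g : PSL(2,F), ∃ x ∈ X, g ∈ Sol x} := by
    refine ⟨X, ?_, rfl, ?_⟩
    · rintro x hx ⟨N, hN1, hN2, hN3⟩
      rw [hX, Finset.mem_image] at hx
      obtain ⟨y, -, rfl⟩ := hx
      have htop := normal_top hi hneg hN1 hN3
      rw [htop] at hN2
      haveI : Group.IsSolvable _ := hN2
      refine psl_not_solvable hlam0 hlam1 ?_
      exact solvable_of_surjective (f := (Subgroup.topEquiv (G := PSL(2,F))).toMonoidHom)
        Subgroup.topEquiv.surjective
    · intro g
      obtain ⟨A, rfl⟩ := pr_surjective g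
      by_cases hc : A.1 1 0 = 0
      · refine ⟨pr (tm i 0 hi), by
          rw [hX]; exact Finset.mem_image_of_mem _ (Finset.mem_univ 0), ?_⟩
        simp only [Sol, Set.mem_setOf_eq]
        have hle : Subgroup.closure ({pr (tm i 0 hi), pr A} : Set (PSL(2,F))) ≤
            (borel F).map pr := by
          rw [Subgroup.closure_le]
          rintro z hz
          simp only [Set.mem_insert_iff, Set.mem_singleton_iff] at hz
          rw [SetLike.mem_coe]
          rcases hz with rfl | rfl
          · refine Subgroup.mem_map_of_mem pr ?_
            rw [mem_borel_iff, tm_coe]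
            simp
          · exact Subgroup.mem_map_of_mem pr (mem_borel_iff.mpr hc)
        haveI : Group.IsSolvable _ := borel_solvable (F := F)
        haveI : Group.IsSolvable ↥((borel F).map pr) :=
          solvable_of_surjective (pr.subgroupMap_surjective (borel F))
        exact solvable_of_solvable_injective (Subgroup.inclusion_injective hle)
      · set yy : F := i * (A.1 1 1 - A.1 0 0) / A.1 1 0 with hyy
        refine ⟨pr (tm i yy hi), by
          rw [hX]; exact Finset.mem_image_of_mem _ (Finset.mem_univ yy), ?_⟩
        simp only [Sol, Set.mem_setOf_eq]
        have htr : (tm i yy hi * A).1 0 0 + (tm i yy hi * A).1 1 1 = 0 := by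
          rw [Matrix.SpecialLinearGroup.coe_mul, tm_coe]
          simp only [Matrix.mul_apply, Fin.sum_univ_two]
          simp only [Matrix.of_apply, Matrix.cons_val', Matrix.cons_val_zero, Matrix.cons_val_one, Matrix.empty_val', Matrix.cons_val_fin_one, Matrix.head_cons, Matrix.head_fin_const, hyy]
          field_simp
          ring
        have hs : pr (tm i yy hi * A) * pr (tm i yy hi * A) = 1 :=
          pr_sq_eq_one (sq_coe_eq_neg_one htr)
        have htr0 : (tm i yy hi).1 0 0 + (tm i yy hi).1 1 1 = 0 := by
          rw [tm_coe]; simp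
        have ha : pr (tm i yy hi) * pr (tm i yy hi) = 1 :=
          pr_sq_eq_one (sq_coe_eq_neg_one htr0)
        rw [_root_.map_mul] at hs
        have hainv : (pr (tm i yy hi))⁻¹ = pr (tm i yy hi) :=
          inv_eq_of_mul_eq_one_right ha
        have h1 : (pr (tm i yy hi) * pr A)⁻¹ = pr (tm i yy hi) * pr A :=
          inv_eq_of_mul_eq_one_right hs
        have hconj : pr (tm i yy hi) * pr A * (pr (tm i yy hi))⁻¹ = (pr A)⁻¹ := by
          rw [mul_inv_rev] at h1
          calc pr (tm i yy hi) * pr A * (pr (tm i yy hi))⁻¹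
              = ((pr A)⁻¹ * (pr (tm i yy hi))⁻¹) * (pr (tm i yy hi))⁻¹ := by rw [h1]
            _ = (pr A)⁻¹ * ((pr (tm i yy hi)) * (pr (tm i yy hi)))⁻¹ := by
                rw [mul_inv_rev, mul_assoc]
            _ = (pr A)⁻¹ := by rw [ha, inv_one, mul_one]
        exact solvable_closure_of_inv ha hconj
  calc solvNumber (PSL(2,F)) ≤ X.card := Nat.sInf_le hmem
    _ ≤ q := by
        rw [hX]
        exact Finset.card_image_le.trans (by rw [Finset.card_univ, hq])
end
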